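/- arXiv:1511.04189 — 3 statements merged into one kernel-verified Lean document; each statement's English description precedes it below -/
import Mathlib

section
/- For every k ∈ ℕ the following identities of operators on smooth functions hold: (E+n) X_s^k − X_s^k (E+n) = k X_s^k, and D_s X_s^k − X_s^k D_s = −i (k(k−1)/2) X_s^{k−1} − i k X_s^{k−1}(E+n). -/
noncomputable section

open Complex Finset

/-- The configuration space `ℝ^{2n} × ℝ^n`, with points `(x, y, q)` where
`x y : Fin n → ℝ` are the base variables and `q : Fin n → ℝ` the fiber variables. -/
abbrev Pt (n : ℕ) := (Fin n → ℝ) × (Fin n → ℝ) × (Fin n → ℝ)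

/-- Partial derivative with respect to `x_j`. -/
def pdx (n : ℕ) (j : Fin n) (f : Pt n → ℂ) : Pt n → ℂ := fun p =>
  deriv (fun t => f (Function.update p.1 j t, p.2.1, p.2.2)) (p.1 j)

/-- Partial derivative with respect to `y_j`. -/
def pdy (n : ℕ) (j : Fin n) (f : Pt n → ℂ) : Pt n → ℂ := fun p =>
  deriv (fun t => f (p.1, Function.update p.2.1 j t, p.2.2)) (p.2.1 j)

/-- Partial derivative with respect to `q_j`. -/
def pdq (n : ℕ) (j : Fin n) (f : Pt n → ℂ) : Pt n → ℂ := fun p =>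
  deriv (fun t => f (p.1, p.2.1, Function.update p.2.2 j t)) (p.2.2 j)

/-- The symplectic Dirac operator `D_s f = Σ_j (i q_j ∂_{y_j} f − ∂_{x_j} ∂_{q_j} f)`. -/
def Ds (n : ℕ) (f : Pt n → ℂ) : Pt n → ℂ := fun p =>
  ∑ j : Fin n, (Complex.I * (p.2.2 j : ℂ) * pdy n j f p - pdx n j (pdq n j f) p)

/-- The operator `X_s f = Σ_j (y_j ∂_{q_j} f + i x_j q_j f)`. -/
def Xs (n : ℕ) (f : Pt n → ℂ) : Pt n → ℂ := fun p =>
  ∑ j : Fin n, ((p.2.1 j : ℂ) * pdq n j f p + Complex.I * (p.1 j : ℂ) * (p.2.2 j : ℂ) * f p)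

/-- The Euler operator `E f = Σ_j (x_j ∂_{x_j} f + y_j ∂_{y_j} f)`. -/
def Eul (n : ℕ) (f : Pt n → ℂ) : Pt n → ℂ := fun p =>
  ∑ j : Fin n, ((p.1 j : ℂ) * pdx n j f p + (p.2.1 j : ℂ) * pdy n j f p)

/-- The operator `E + n`. -/
def EN (n : ℕ) (f : Pt n → ℂ) : Pt n → ℂ := fun p => Eul n f p + (n : ℂ) * f p

-- direction vectors
def vX (n : ℕ) (j : Fin n) : Pt n := (Pi.single j 1, 0, 0)
def vY (n : ℕ) (j : Fin n) : Pt n := (0, Pi.single j 1, 0)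
def vQ (n : ℕ) (j : Fin n) : Pt n := (0, 0, Pi.single j 1)

def pd (n : ℕ) (v : Pt n) (f : Pt n → ℂ) : Pt n → ℂ := fun p => fderiv ℝ f p v

lemma line_hasDerivAt (n : ℕ) (p v : Pt n) (t0 : ℝ) :
    HasDerivAt (fun t : ℝ => p + (t - t0) • v) v t0 := by
  have h1 : HasDerivAt (fun t : ℝ => t - t0) 1 t0 := (hasDerivAt_id t0).sub_const t0
  have h2 := (h1.smul_const v).const_add p
  simpa using h2

lemma deriv_comp_line {n : ℕ} {f : Pt n → ℂ} {p : Pt n} (hf : DifferentiableAt ℝ f p)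
    (v : Pt n) (t0 : ℝ) :
    deriv (fun t => f (p + (t - t0) • v)) t0 = fderiv ℝ f p v := by
  have hg := line_hasDerivAt n p v t0
  have hfp : HasFDerivAt f (fderiv ℝ f p) ((fun t : ℝ => p + (t - t0) • v) t0) := by
    simpa using hf.hasFDerivAt
  exact (hfp.comp_hasDerivAt t0 hg).deriv

lemma updx_line (n : ℕ) (p : Pt n) (j : Fin n) (t : ℝ) :
    ((Function.update p.1 j t, p.2.1, p.2.2) : Pt n) = p + (t - p.1 j) • vX n j := by
  refine Prod.ext ?_ (Prod.ext ?_ ?_) <;>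
    simp only [vX, Prod.fst_add, Prod.snd_add, Prod.smul_fst, Prod.smul_snd, smul_zero, add_zero]
  · funext i
    by_cases h : i = j
    · subst h; simp [Function.update_self, Pi.single_eq_same]
    · simp [Function.update_of_ne h, Pi.single_eq_of_ne h]

lemma updy_line (n : ℕ) (p : Pt n) (j : Fin n) (t : ℝ) :
    ((p.1, Function.update p.2.1 j t, p.2.2) : Pt n) = p + (t - p.2.1 j) • vY n j := by
  refine Prod.ext ?_ (Prod.ext ?_ ?_) <;>
    simp only [vY, Prod.fst_add, Prod.snd_add, Prod.smul_fst, Prod.smul_snd, smul_zero, add_zero]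
  · funext i
    by_cases h : i = j
    · subst h; simp [Function.update_self, Pi.single_eq_same]
    · simp [Function.update_of_ne h, Pi.single_eq_of_ne h]

lemma updq_line (n : ℕ) (p : Pt n) (j : Fin n) (t : ℝ) :
    ((p.1, p.2.1, Function.update p.2.2 j t) : Pt n) = p + (t - p.2.2 j) • vQ n j := by
  refine Prod.ext ?_ (Prod.ext ?_ ?_) <;>
    simp only [vQ, Prod.fst_add, Prod.snd_add, Prod.smul_fst, Prod.smul_snd, smul_zero, add_zero]
  · funext i
    by_cases h : i = j
    · subst h; simp [Function.update_self, Pi.single_eq_same]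
    · simp [Function.update_of_ne h, Pi.single_eq_of_ne h]

lemma pdx_eq {n : ℕ} {f : Pt n → ℂ} {p : Pt n} (hf : DifferentiableAt ℝ f p) (j : Fin n) :
    pdx n j f p = pd n (vX n j) f p := by
  show deriv _ _ = _
  simp only [updx_line]
  rw [deriv_comp_line hf]; rfl
lemma pdy_eq {n : ℕ} {f : Pt n → ℂ} {p : Pt n} (hf : DifferentiableAt ℝ f p) (j : Fin n) :
    pdy n j f p = pd n (vY n j) f p := by
  show deriv _ _ = _
  simp only [updy_line]
  rw [deriv_comp_line hf]; rfl
lemma pdq_eq {n : ℕ} {f : Pt n → ℂ} {p : Pt n} (hf : DifferentiableAt ℝ f p) (j : Fin n) :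
    pdq n j f p = pd n (vQ n j) f p := by
  show deriv _ _ = _
  simp only [updq_line]
  rw [deriv_comp_line hf]; rfl

@[fun_prop]
lemma pd_contDiff {n : ℕ} {f : Pt n → ℂ} (hf : ContDiff ℝ (⊤ : ℕ∞) f) (v : Pt n) :
    ContDiff ℝ (⊤ : ℕ∞) (pd n v f) := by
  have : pd n v f = fun p => (ContinuousLinearMap.apply ℝ ℂ v) (fderiv ℝ f p) := rfl
  rw [this]
  exact (ContinuousLinearMap.apply ℝ ℂ v).contDiff.comp (hf.fderiv_right (by simp))

-- coordinate functions
def cX (n : ℕ) (j : Fin n) : Pt n → ℂ := fun p => ((p.1 j : ℝ) : ℂ)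
def cY (n : ℕ) (j : Fin n) : Pt n → ℂ := fun p => ((p.2.1 j : ℝ) : ℂ)
def cQ (n : ℕ) (j : Fin n) : Pt n → ℂ := fun p => ((p.2.2 j : ℝ) : ℂ)

def cXL (n : ℕ) (j : Fin n) : Pt n →L[ℝ] ℂ :=
  Complex.ofRealCLM.comp ((ContinuousLinearMap.proj j).comp
    (ContinuousLinearMap.fst ℝ (Fin n → ℝ) ((Fin n → ℝ) × (Fin n → ℝ))))
def cYL (n : ℕ) (j : Fin n) : Pt n →L[ℝ] ℂ :=
  Complex.ofRealCLM.comp ((ContinuousLinearMap.proj j).comp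
    ((ContinuousLinearMap.fst ℝ (Fin n → ℝ) (Fin n → ℝ)).comp
      (ContinuousLinearMap.snd ℝ (Fin n → ℝ) ((Fin n → ℝ) × (Fin n → ℝ)))))
def cQL (n : ℕ) (j : Fin n) : Pt n →L[ℝ] ℂ :=
  Complex.ofRealCLM.comp ((ContinuousLinearMap.proj j).comp
    ((ContinuousLinearMap.snd ℝ (Fin n → ℝ) (Fin n → ℝ)).comp
      (ContinuousLinearMap.snd ℝ (Fin n → ℝ) ((Fin n → ℝ) × (Fin n → ℝ)))))

lemma cX_eq (n : ℕ) (j : Fin n) : cX n j = ⇑(cXL n j) := rfl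
lemma cY_eq (n : ℕ) (j : Fin n) : cY n j = ⇑(cYL n j) := rfl
lemma cQ_eq (n : ℕ) (j : Fin n) : cQ n j = ⇑(cQL n j) := rfl

@[fun_prop]
lemma cX_contDiff (n : ℕ) (j : Fin n) : ContDiff ℝ (⊤ : ℕ∞) (cX n j) := by
  rw [cX_eq]; exact (cXL n j).contDiff
@[fun_prop]
lemma cY_contDiff (n : ℕ) (j : Fin n) : ContDiff ℝ (⊤ : ℕ∞) (cY n j) := by
  rw [cY_eq]; exact (cYL n j).contDiff
@[fun_prop]
lemma cQ_contDiff (n : ℕ) (j : Fin n) : ContDiff ℝ (⊤ : ℕ∞) (cQ n j) := by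
  rw [cQ_eq]; exact (cQL n j).contDiff

lemma pd_cX {n : ℕ} (v : Pt n) (j : Fin n) (p : Pt n) :
    pd n v (cX n j) p = ((v.1 j : ℝ) : ℂ) := by
  rw [pd, cX_eq, (cXL n j).fderiv]; rfl
lemma pd_cY {n : ℕ} (v : Pt n) (j : Fin n) (p : Pt n) :
    pd n v (cY n j) p = ((v.2.1 j : ℝ) : ℂ) := by
  rw [pd, cY_eq, (cYL n j).fderiv]; rfl
lemma pd_cQ {n : ℕ} (v : Pt n) (j : Fin n) (p : Pt n) :
    pd n v (cQ n j) p = ((v.2.2 j : ℝ) : ℂ) := by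
  rw [pd, cQ_eq, (cQL n j).fderiv]; rfl

lemma pd_add {n : ℕ} {g h : Pt n → ℂ} (v : Pt n) (p : Pt n)
    (hg : ContDiff ℝ (⊤ : ℕ∞) g) (hh : ContDiff ℝ (⊤ : ℕ∞) h) :
    pd n v (fun p => g p + h p) p = pd n v g p + pd n v h p := by
  simp only [pd]
  rw [fderiv_fun_add (hg.differentiable (by simp) p) (hh.differentiable (by simp) p)]
  rfl

lemma pd_sub {n : ℕ} {g h : Pt n → ℂ} (v : Pt n) (p : Pt n)
    (hg : ContDiff ℝ (⊤ : ℕ∞) g) (hh : ContDiff ℝ (⊤ : ℕ∞) h) :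
    pd n v (fun p => g p - h p) p = pd n v g p - pd n v h p := by
  simp only [pd]
  rw [fderiv_fun_sub (hg.differentiable (by simp) p) (hh.differentiable (by simp) p)]
  rfl

lemma pd_mul {n : ℕ} {g h : Pt n → ℂ} (v : Pt n) (p : Pt n)
    (hg : ContDiff ℝ (⊤ : ℕ∞) g) (hh : ContDiff ℝ (⊤ : ℕ∞) h) :
    pd n v (fun p => g p * h p) p = pd n v g p * h p + g p * pd n v h p := by
  simp only [pd]
  rw [fderiv_fun_mul (hg.differentiable (by simp) p) (hh.differentiable (by simp) p)]
  simp [ContinuousLinearMap.add_apply, ContinuousLinearMap.smul_apply, smul_eq_mul]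
  ring

lemma pd_const_mul {n : ℕ} {g : Pt n → ℂ} (v : Pt n) (p : Pt n) (c : ℂ)
    (hg : ContDiff ℝ (⊤ : ℕ∞) g) :
    pd n v (fun p => c * g p) p = c * pd n v g p := by
  simp only [pd]
  rw [fderiv_const_mul (hg.differentiable (by simp) p) c]
  rfl

lemma pd_sum {n : ℕ} {ι : Type*} (s : Finset ι) {F : ι → Pt n → ℂ} (v : Pt n) (p : Pt n)
    (hF : ∀ i, ContDiff ℝ (⊤ : ℕ∞) (F i)) :
    pd n v (fun p => ∑ i ∈ s, F i p) p = ∑ i ∈ s, pd n v (F i) p := by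
  simp only [pd]
  rw [fderiv_fun_sum (fun i _ => (hF i).differentiable (by simp) p)]
  simp [ContinuousLinearMap.sum_apply]

lemma pd_comm {n : ℕ} {f : Pt n → ℂ} (hf : ContDiff ℝ (⊤ : ℕ∞) f) (v w : Pt n) (p : Pt n) :
    pd n v (pd n w f) p = pd n w (pd n v f) p := by
  have hd : DifferentiableAt ℝ (fderiv ℝ f) p :=
    ((hf.fderiv_right (m := (⊤ : ℕ∞)) (by simp)).differentiable (by simp)) p
  have key : ∀ u z : Pt n, pd n u (pd n z f) p = fderiv ℝ (fderiv ℝ f) p u z := by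
    intro u z
    have h1 : pd n z f = fun q => (ContinuousLinearMap.apply ℝ ℂ z) (fderiv ℝ f q) := rfl
    have h2 : HasFDerivAt (fun q => (ContinuousLinearMap.apply ℝ ℂ z) (fderiv ℝ f q))
        ((ContinuousLinearMap.apply ℝ ℂ z).comp (fderiv ℝ (fderiv ℝ f) p)) p :=
      ((ContinuousLinearMap.apply ℝ ℂ z).hasFDerivAt).comp p hd.hasFDerivAt
    rw [pd, h1, h2.fderiv]
    rfl
  rw [key, key]
  exact (hf.contDiffAt.isSymmSndFDerivAt (by rw [minSmoothness_of_isRCLikeNormedField]; exact WithTop.coe_le_coe.2 le_top)).eq v w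

lemma pd_const {n : ℕ} (v : Pt n) (p : Pt n) (c : ℂ) : pd n v (fun _ => c) p = 0 := by
  simp [pd]

-- building blocks
def XF (n : ℕ) (j : Fin n) (f : Pt n → ℂ) : Pt n → ℂ := fun p =>
  cY n j p * pd n (vQ n j) f p + Complex.I * (cX n j p * (cQ n j p * f p))
def DF (n : ℕ) (l : Fin n) (f : Pt n → ℂ) : Pt n → ℂ := fun p =>
  Complex.I * (cQ n l p * pd n (vY n l) f p) - pd n (vX n l) (pd n (vQ n l) f) p
def EF (n : ℕ) (l : Fin n) (f : Pt n → ℂ) : Pt n → ℂ := fun p =>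
  cX n l p * pd n (vX n l) f p + cY n l p * pd n (vY n l) f p

@[fun_prop]
lemma XF_contDiff {n : ℕ} {f : Pt n → ℂ} (hf : ContDiff ℝ (⊤ : ℕ∞) f) (j : Fin n) :
    ContDiff ℝ (⊤ : ℕ∞) (XF n j f) := by unfold XF; fun_prop
@[fun_prop]
lemma DF_contDiff {n : ℕ} {f : Pt n → ℂ} (hf : ContDiff ℝ (⊤ : ℕ∞) f) (l : Fin n) :
    ContDiff ℝ (⊤ : ℕ∞) (DF n l f) := by unfold DF; fun_prop
@[fun_prop]
lemma EF_contDiff {n : ℕ} {f : Pt n → ℂ} (hf : ContDiff ℝ (⊤ : ℕ∞) f) (l : Fin n) :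
    ContDiff ℝ (⊤ : ℕ∞) (EF n l f) := by unfold EF; fun_prop

lemma pdq_fun_eq {n : ℕ} {f : Pt n → ℂ} (hf : ContDiff ℝ (⊤ : ℕ∞) f) (j : Fin n) :
    pdq n j f = pd n (vQ n j) f :=
  funext fun p => pdq_eq ((hf.differentiable (by simp)) p) j
lemma pdx_fun_eq {n : ℕ} {f : Pt n → ℂ} (hf : ContDiff ℝ (⊤ : ℕ∞) f) (j : Fin n) :
    pdx n j f = pd n (vX n j) f :=
  funext fun p => pdx_eq ((hf.differentiable (by simp)) p) j
lemma pdy_fun_eq {n : ℕ} {f : Pt n → ℂ} (hf : ContDiff ℝ (⊤ : ℕ∞) f) (j : Fin n) :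
    pdy n j f = pd n (vY n j) f :=
  funext fun p => pdy_eq ((hf.differentiable (by simp)) p) j

lemma Xs_eq {n : ℕ} {f : Pt n → ℂ} (hf : ContDiff ℝ (⊤ : ℕ∞) f) :
    Xs n f = fun p => ∑ j : Fin n, XF n j f p := by
  funext p
  refine Finset.sum_congr rfl fun j _ => ?_
  rw [pdq_fun_eq hf j]
  simp only [XF, cX, cY, cQ]
  ring

lemma Ds_eq {n : ℕ} {f : Pt n → ℂ} (hf : ContDiff ℝ (⊤ : ℕ∞) f) :
    Ds n f = fun p => ∑ l : Fin n, DF n l f p := by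
  funext p
  refine Finset.sum_congr rfl fun l _ => ?_
  rw [pdy_fun_eq hf l, pdq_fun_eq hf l,
    pdx_fun_eq (pd_contDiff hf (vQ n l)) l]
  simp only [DF, cX, cY, cQ]
  ring_nf

lemma EN_eq {n : ℕ} {f : Pt n → ℂ} (hf : ContDiff ℝ (⊤ : ℕ∞) f) :
    EN n f = fun p => (∑ l : Fin n, EF n l f p) + (n : ℂ) * f p := by
  funext p
  unfold EN Eul
  congr 1
  refine Finset.sum_congr rfl fun l _ => ?_
  rw [pdx_fun_eq hf l, pdy_fun_eq hf l]
  simp only [EF, cX, cY]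

@[fun_prop]
lemma Xs_contDiff {n : ℕ} {f : Pt n → ℂ} (hf : ContDiff ℝ (⊤ : ℕ∞) f) :
    ContDiff ℝ (⊤ : ℕ∞) (Xs n f) := by
  rw [Xs_eq hf]; exact ContDiff.sum fun j _ => XF_contDiff hf j
@[fun_prop]
lemma Ds_contDiff {n : ℕ} {f : Pt n → ℂ} (hf : ContDiff ℝ (⊤ : ℕ∞) f) :
    ContDiff ℝ (⊤ : ℕ∞) (Ds n f) := by
  rw [Ds_eq hf]; exact ContDiff.sum fun j _ => DF_contDiff hf j
@[fun_prop]
lemma EN_contDiff {n : ℕ} {f : Pt n → ℂ} (hf : ContDiff ℝ (⊤ : ℕ∞) f) :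
    ContDiff ℝ (⊤ : ℕ∞) (EN n f) := by
  rw [EN_eq hf]
  exact (ContDiff.sum fun j _ => EF_contDiff hf j).add (contDiff_const.mul hf)

-- coordinates of the direction vectors
@[simp] lemma vX_1 (n : ℕ) (l : Fin n) : (vX n l).1 = Pi.single l 1 := rfl
@[simp] lemma vX_21 (n : ℕ) (l : Fin n) : (vX n l).2.1 = 0 := rfl
@[simp] lemma vX_22 (n : ℕ) (l : Fin n) : (vX n l).2.2 = 0 := rfl
@[simp] lemma vY_1 (n : ℕ) (l : Fin n) : (vY n l).1 = 0 := rfl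
@[simp] lemma vY_21 (n : ℕ) (l : Fin n) : (vY n l).2.1 = Pi.single l 1 := rfl
@[simp] lemma vY_22 (n : ℕ) (l : Fin n) : (vY n l).2.2 = 0 := rfl
@[simp] lemma vQ_1 (n : ℕ) (l : Fin n) : (vQ n l).1 = 0 := rfl
@[simp] lemma vQ_21 (n : ℕ) (l : Fin n) : (vQ n l).2.1 = 0 := rfl
@[simp] lemma vQ_22 (n : ℕ) (l : Fin n) : (vQ n l).2.2 = Pi.single l 1 := rfl

lemma pairE {n : ℕ} {f : Pt n → ℂ} (hf : ContDiff ℝ (⊤ : ℕ∞) f) (l j : Fin n) (p : Pt n) :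
    EF n l (XF n j f) p - XF n j (EF n l f) p = if l = j then XF n j f p else 0 := by
  unfold EF XF
  simp (disch := fun_prop) only [pd_add, pd_sub, pd_const_mul, pd_mul, pd_cX, pd_cY, pd_cQ,
    pd_const]
  simp only [vX_1, vX_21, vX_22, vY_1, vY_21, vY_22, vQ_1, vQ_21, vQ_22, Pi.single_apply,
    Pi.zero_apply, Pi.one_apply, Complex.ofReal_zero, Complex.ofReal_one, apply_ite Complex.ofReal,
    zero_mul, mul_zero, add_zero, zero_add, mul_one]
  rw [pd_comm hf (vQ n j) (vX n l) p, pd_comm hf (vQ n j) (vY n l) p]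
  by_cases h : l = j
  · subst h
    simp only [eq_self_iff_true, if_true]
    ring
  · simp only [if_neg h, if_neg (Ne.symm h)]
    ring

-- function-level versions of the expansion rules
lemma pd_add_fun {n : ℕ} {g h : Pt n → ℂ} (v : Pt n)
    (hg : ContDiff ℝ (⊤ : ℕ∞) g) (hh : ContDiff ℝ (⊤ : ℕ∞) h) :
    pd n v (fun p => g p + h p) = fun p => pd n v g p + pd n v h p :=
  funext fun p => pd_add v p hg hh
lemma pd_sub_fun {n : ℕ} {g h : Pt n → ℂ} (v : Pt n)
    (hg : ContDiff ℝ (⊤ : ℕ∞) g) (hh : ContDiff ℝ (⊤ : ℕ∞) h) :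
    pd n v (fun p => g p - h p) = fun p => pd n v g p - pd n v h p :=
  funext fun p => pd_sub v p hg hh
lemma pd_mul_fun {n : ℕ} {g h : Pt n → ℂ} (v : Pt n)
    (hg : ContDiff ℝ (⊤ : ℕ∞) g) (hh : ContDiff ℝ (⊤ : ℕ∞) h) :
    pd n v (fun p => g p * h p) = fun p => pd n v g p * h p + g p * pd n v h p :=
  funext fun p => pd_mul v p hg hh
lemma pd_const_mul_fun {n : ℕ} {g : Pt n → ℂ} (v : Pt n) (c : ℂ) (hg : ContDiff ℝ (⊤ : ℕ∞) g) :
    pd n v (fun p => c * g p) = fun p => c * pd n v g p :=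
  funext fun p => pd_const_mul v p c hg
lemma pd_cX_fun {n : ℕ} (v : Pt n) (j : Fin n) :
    pd n v (cX n j) = fun _ => ((v.1 j : ℝ) : ℂ) := funext fun p => pd_cX v j p
lemma pd_cY_fun {n : ℕ} (v : Pt n) (j : Fin n) :
    pd n v (cY n j) = fun _ => ((v.2.1 j : ℝ) : ℂ) := funext fun p => pd_cY v j p
lemma pd_cQ_fun {n : ℕ} (v : Pt n) (j : Fin n) :
    pd n v (cQ n j) = fun _ => ((v.2.2 j : ℝ) : ℂ) := funext fun p => pd_cQ v j p
lemma pd_const_fun {n : ℕ} (v : Pt n) (c : ℂ) :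
    pd n v (fun _ => c) = fun _ => (0 : ℂ) := funext fun p => pd_const v p c

lemma pairD {n : ℕ} {f : Pt n → ℂ} (hf : ContDiff ℝ (⊤ : ℕ∞) f) (l j : Fin n) (p : Pt n) :
    DF n l (XF n j f) p - XF n j (DF n l f) p =
      if l = j then
        -Complex.I * (cX n j p * pd n (vX n j) f p + cY n j p * pd n (vY n j) f p + f p)
      else 0 := by
  unfold DF XF
  simp (disch := fun_prop) only [pd_add, pd_sub, pd_const_mul, pd_mul, pd_cX, pd_cY, pd_cQ,
    pd_const, pd_add_fun, pd_sub_fun, pd_const_mul_fun, pd_mul_fun, pd_cX_fun, pd_cY_fun,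
    pd_cQ_fun, pd_const_fun]
  simp only [vX_1, vX_21, vX_22, vY_1, vY_21, vY_22, vQ_1, vQ_21, vQ_22, Pi.single_apply,
    Pi.zero_apply, Pi.one_apply, Complex.ofReal_zero, Complex.ofReal_one, apply_ite Complex.ofReal,
    zero_mul, mul_zero, add_zero, zero_add, mul_one]
  rw [pd_comm (pd_contDiff hf (vQ n l)) (vQ n j) (vX n l) p,
    show pd n (vQ n j) (pd n (vQ n l) f) = pd n (vQ n l) (pd n (vQ n j) f) from
      funext fun p => pd_comm hf _ _ p,
    pd_comm hf (vQ n j) (vY n l) p]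
  by_cases h : l = j
  · subst h
    simp only [eq_self_iff_true, if_true]
    ring
  · simp only [if_neg h, if_neg (Ne.symm h)]
    ring

lemma pd_sum_fun {n : ℕ} {ι : Type*} (s : Finset ι) {F : ι → Pt n → ℂ} (v : Pt n)
    (hF : ∀ i, ContDiff ℝ (⊤ : ℕ∞) (F i)) :
    pd n v (fun p => ∑ i ∈ s, F i p) = fun p => ∑ i ∈ s, pd n v (F i) p :=
  funext fun p => pd_sum s v p hF

lemma EF_sum {n : ℕ} {F : Fin n → Pt n → ℂ} (hF : ∀ i, ContDiff ℝ (⊤ : ℕ∞) (F i)) (l : Fin n)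
    (p : Pt n) :
    EF n l (fun p => ∑ i : Fin n, F i p) p = ∑ i : Fin n, EF n l (F i) p := by
  unfold EF
  rw [pd_sum Finset.univ (vX n l) p hF, pd_sum Finset.univ (vY n l) p hF]
  simp only [Finset.mul_sum]
  rw [← Finset.sum_add_distrib]

lemma XF_sum {n : ℕ} {F : Fin n → Pt n → ℂ} (hF : ∀ i, ContDiff ℝ (⊤ : ℕ∞) (F i)) (j : Fin n)
    (p : Pt n) :
    XF n j (fun p => ∑ i : Fin n, F i p) p = ∑ i : Fin n, XF n j (F i) p := by
  unfold XF
  rw [pd_sum Finset.univ (vQ n j) p hF]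
  simp only [Finset.mul_sum]
  rw [← Finset.sum_add_distrib]

lemma DF_sum {n : ℕ} {F : Fin n → Pt n → ℂ} (hF : ∀ i, ContDiff ℝ (⊤ : ℕ∞) (F i)) (l : Fin n)
    (p : Pt n) :
    DF n l (fun p => ∑ i : Fin n, F i p) p = ∑ i : Fin n, DF n l (F i) p := by
  unfold DF
  rw [pd_sum Finset.univ (vY n l) p hF, pd_sum_fun Finset.univ (vQ n l) hF,
    pd_sum Finset.univ (vX n l) p (fun i => pd_contDiff (hF i) (vQ n l))]
  simp only [Finset.mul_sum]
  rw [← Finset.sum_sub_distrib]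

lemma XF_add {n : ℕ} {g h : Pt n → ℂ} (j : Fin n) (p : Pt n)
    (hg : ContDiff ℝ (⊤ : ℕ∞) g) (hh : ContDiff ℝ (⊤ : ℕ∞) h) :
    XF n j (fun p => g p + h p) p = XF n j g p + XF n j h p := by
  unfold XF
  rw [pd_add (vQ n j) p hg hh]
  ring

lemma XF_const_mul {n : ℕ} {g : Pt n → ℂ} (j : Fin n) (p : Pt n) (c : ℂ)
    (hg : ContDiff ℝ (⊤ : ℕ∞) g) :
    XF n j (fun p => c * g p) p = c * XF n j g p := by
  unfold XF
  rw [pd_const_mul (vQ n j) p c hg]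
  ring

lemma comm_EN {n : ℕ} {f : Pt n → ℂ} (hf : ContDiff ℝ (⊤ : ℕ∞) f) (p : Pt n) :
    EN n (Xs n f) p - Xs n (EN n f) p = Xs n f p := by
  have hXF : ∀ i : Fin n, ContDiff ℝ (⊤ : ℕ∞) (XF n i f) := fun i => XF_contDiff hf i
  have hEF : ∀ i : Fin n, ContDiff ℝ (⊤ : ℕ∞) (EF n i f) := fun i => EF_contDiff hf i
  have hXsp : Xs n f p = ∑ i : Fin n, XF n i f p := congrFun (Xs_eq hf) p
  have h1 : ∀ l : Fin n, EF n l (Xs n f) p = ∑ j : Fin n, EF n l (XF n j f) p := by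
    intro l; rw [Xs_eq hf]; exact EF_sum hXF l p
  have h2 : ∀ j : Fin n, XF n j (EN n f) p =
      (∑ l : Fin n, XF n j (EF n l f) p) + (n : ℂ) * XF n j f p := by
    intro j
    rw [EN_eq hf, XF_add j p (ContDiff.sum fun i _ => hEF i) (by fun_prop),
      XF_const_mul j p _ hf, XF_sum hEF j p]
  have key : (∑ l : Fin n, ∑ j : Fin n, EF n l (XF n j f) p)
      - (∑ l : Fin n, ∑ j : Fin n, XF n j (EF n l f) p) = ∑ i : Fin n, XF n i f p := by
    rw [← Finset.sum_sub_distrib]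
    calc (∑ l : Fin n, ((∑ j : Fin n, EF n l (XF n j f) p) - ∑ j : Fin n, XF n j (EF n l f) p))
        = ∑ l : Fin n, ∑ j : Fin n, (EF n l (XF n j f) p - XF n j (EF n l f) p) := by
          exact Finset.sum_congr rfl fun l _ => (Finset.sum_sub_distrib _ _).symm
      _ = ∑ l : Fin n, ∑ j : Fin n, (if l = j then XF n j f p else 0) :=
          Finset.sum_congr rfl fun l _ => Finset.sum_congr rfl fun j _ => pairE hf l j p
      _ = ∑ i : Fin n, XF n i f p := by simp
  rw [EN_eq (Xs_contDiff hf), Xs_eq (EN_contDiff hf)]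
  simp only
  rw [Finset.sum_congr rfl fun l _ => h1 l, Finset.sum_congr rfl fun j _ => h2 j,
    Finset.sum_add_distrib, ← Finset.mul_sum, ← hXsp,
    show (∑ j : Fin n, ∑ l : Fin n, XF n j (EF n l f) p)
      = ∑ l : Fin n, ∑ j : Fin n, XF n j (EF n l f) p from Finset.sum_comm]
  rw [hXsp]
  linear_combination key

lemma comm_Ds {n : ℕ} {f : Pt n → ℂ} (hf : ContDiff ℝ (⊤ : ℕ∞) f) (p : Pt n) :
    Ds n (Xs n f) p - Xs n (Ds n f) p = -Complex.I * EN n f p := by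
  have hXF : ∀ i : Fin n, ContDiff ℝ (⊤ : ℕ∞) (XF n i f) := fun i => XF_contDiff hf i
  have hDF : ∀ i : Fin n, ContDiff ℝ (⊤ : ℕ∞) (DF n i f) := fun i => DF_contDiff hf i
  have h1 : ∀ l : Fin n, DF n l (Xs n f) p = ∑ j : Fin n, DF n l (XF n j f) p := by
    intro l; rw [Xs_eq hf]; exact DF_sum hXF l p
  have h2 : ∀ j : Fin n, XF n j (Ds n f) p = ∑ l : Fin n, XF n j (DF n l f) p := by
    intro j; rw [Ds_eq hf]; exact XF_sum hDF j p
  rw [Ds_eq (Xs_contDiff hf), Xs_eq (Ds_contDiff hf)]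
  simp only
  rw [Finset.sum_congr rfl fun l _ => h1 l, Finset.sum_congr rfl fun j _ => h2 j,
    show (∑ j : Fin n, ∑ l : Fin n, XF n j (DF n l f) p)
      = ∑ l : Fin n, ∑ j : Fin n, XF n j (DF n l f) p from Finset.sum_comm,
    ← Finset.sum_sub_distrib]
  calc (∑ l : Fin n, ((∑ j : Fin n, DF n l (XF n j f) p) - ∑ j : Fin n, XF n j (DF n l f) p))
      = ∑ l : Fin n, ∑ j : Fin n, (DF n l (XF n j f) p - XF n j (DF n l f) p) :=
        Finset.sum_congr rfl fun l _ => (Finset.sum_sub_distrib _ _).symm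
    _ = ∑ l : Fin n, ∑ j : Fin n, (if l = j then
          -Complex.I * (cX n j p * pd n (vX n j) f p + cY n j p * pd n (vY n j) f p + f p)
        else 0) :=
        Finset.sum_congr rfl fun l _ => Finset.sum_congr rfl fun j _ => pairD hf l j p
    _ = ∑ j : Fin n, -Complex.I * (cX n j p * pd n (vX n j) f p + cY n j p * pd n (vY n j) f p
          + f p) := by simp
    _ = -Complex.I * ((∑ l : Fin n, EF n l f p) + (n : ℂ) * f p) := by
        rw [← Finset.mul_sum]
        congr 1
        rw [Finset.sum_add_distrib, Finset.sum_const]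
        simp [EF, Finset.card_univ, mul_comm]
    _ = -Complex.I * EN n f p := by rw [EN_eq hf]

lemma Xs_add {n : ℕ} {g h : Pt n → ℂ} (hg : ContDiff ℝ (⊤ : ℕ∞) g) (hh : ContDiff ℝ (⊤ : ℕ∞) h) :
    Xs n (fun p => g p + h p) = fun p => Xs n g p + Xs n h p := by
  rw [Xs_eq (hg.add hh), Xs_eq hg, Xs_eq hh]
  funext p
  rw [← Finset.sum_add_distrib]
  exact Finset.sum_congr rfl fun j _ => XF_add j p hg hh

lemma Xs_const_mul {n : ℕ} {g : Pt n → ℂ} (c : ℂ) (hg : ContDiff ℝ (⊤ : ℕ∞) g) :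
    Xs n (fun p => c * g p) = fun p => c * Xs n g p := by
  rw [Xs_eq (by fun_prop), Xs_eq hg]
  funext p
  rw [Finset.mul_sum]
  exact Finset.sum_congr rfl fun j _ => XF_const_mul j p c hg

lemma iter_contDiff {n : ℕ} {f : Pt n → ℂ} (hf : ContDiff ℝ (⊤ : ℕ∞) f) (k : ℕ) :
    ContDiff ℝ (⊤ : ℕ∞) ((Xs n)^[k] f) := by
  induction k with
  | zero => exact hf
  | succ k ih => rw [Function.iterate_succ_apply']; exact Xs_contDiff ih


/-- For every `k ∈ ℕ`, `[E+n, X_s^k] = k X_s^k` and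
`[D_s, X_s^k] = −i k(k−1)/2 · X_s^{k−1} − i k X_s^{k−1}(E+n)` as operators on
smooth functions. -/
theorem commutators_with_Xs_pow (n : ℕ) (hn : 1 ≤ n) (k : ℕ) (f : Pt n → ℂ)
    (hf : ContDiff ℝ (⊤ : ℕ∞) f) :
    (∀ p, EN n ((Xs n)^[k] f) p - (Xs n)^[k] (EN n f) p = (k : ℂ) * (Xs n)^[k] f p) ∧
    (∀ p, Ds n ((Xs n)^[k] f) p - (Xs n)^[k] (Ds n f) p =
      -Complex.I * ((k : ℂ) * ((k : ℂ) - 1) / 2) * (Xs n)^[k-1] f p -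
        Complex.I * (k : ℂ) * (Xs n)^[k-1] (EN n f) p) := by
  induction k with
  | zero =>
    constructor <;> intro p <;> simp
  | succ k ih =>
    obtain ⟨ih1, ih2⟩ := ih
    have hg : ContDiff ℝ (⊤ : ℕ∞) ((Xs n)^[k] f) := iter_contDiff hf k
    have hgE : ContDiff ℝ (⊤ : ℕ∞) ((Xs n)^[k] (EN n f)) := iter_contDiff (EN_contDiff hf) k
    have hENg : EN n ((Xs n)^[k] f) =
        fun q => (Xs n)^[k] (EN n f) q + (k : ℂ) * (Xs n)^[k] f q :=
      funext fun q => by linear_combination ih1 q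
    have part1 : ∀ p, EN n ((Xs n)^[k+1] f) p - (Xs n)^[k+1] (EN n f) p =
        ((k+1 : ℕ) : ℂ) * (Xs n)^[k+1] f p := by
      intro p
      rw [Function.iterate_succ_apply' (Xs n) k f, Function.iterate_succ_apply' (Xs n) k (EN n f)]
      have e1 := comm_EN hg p
      have e2 : Xs n (EN n ((Xs n)^[k] f)) p =
          Xs n ((Xs n)^[k] (EN n f)) p + (k : ℂ) * Xs n ((Xs n)^[k] f) p := by
        rw [hENg, Xs_add hgE (contDiff_const.mul hg), Xs_const_mul (k : ℂ) hg]
      push_cast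
      linear_combination e1 + e2
    refine ⟨part1, ?_⟩
    intro p
    match k, ih1, ih2 with
    | 0, ih1, ih2 =>
      have := comm_Ds hf p
      simp only [Function.iterate_one, zero_add, Function.iterate_zero_apply, Nat.cast_one]
      norm_num
      linear_combination this
    | (m+1), ih1, ih2 =>
      have hg : ContDiff ℝ (⊤ : ℕ∞) ((Xs n)^[m+1] f) := iter_contDiff hf (m+1)
      have hm : ContDiff ℝ (⊤ : ℕ∞) ((Xs n)^[m] f) := iter_contDiff hf m
      have hmE : ContDiff ℝ (⊤ : ℕ∞) ((Xs n)^[m] (EN n f)) := iter_contDiff (EN_contDiff hf) m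
      have hmD : ContDiff ℝ (⊤ : ℕ∞) ((Xs n)^[m+1] (Ds n f)) := iter_contDiff (Ds_contDiff hf) (m+1)
      have hDg : Ds n ((Xs n)^[m+1] f) = fun q => (Xs n)^[m+1] (Ds n f) q +
          ((-Complex.I * ((((m:ℂ)+1) * (((m:ℂ)+1) - 1)) / 2)) * (Xs n)^[m] f q +
            (-Complex.I * ((m:ℂ)+1)) * (Xs n)^[m] (EN n f) q) := by
        funext q
        have h := ih2 q
        simp only [Nat.add_sub_cancel] at h
        push_cast at h
        linear_combination h
      have e1 := comm_Ds hg p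
      have e2 : Xs n (Ds n ((Xs n)^[m+1] f)) p = Xs n ((Xs n)^[m+1] (Ds n f)) p +
          ((-Complex.I * ((((m:ℂ)+1) * (((m:ℂ)+1) - 1)) / 2)) * (Xs n)^[m+1] f p +
            (-Complex.I * ((m:ℂ)+1)) * (Xs n)^[m+1] (EN n f) p) := by
        rw [hDg, Xs_add hmD (by fun_prop), Xs_add (by fun_prop) (by fun_prop),
          Xs_const_mul _ hm, Xs_const_mul _ hmE,
          Function.iterate_succ_apply' (Xs n) m f,
          Function.iterate_succ_apply' (Xs n) m (EN n f)]
      have e3 := ih1 p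
      rw [Function.iterate_succ_apply' (Xs n) (m+1) f,
        Function.iterate_succ_apply' (Xs n) (m+1) (Ds n f)]
      simp only [Nat.add_sub_cancel]
      push_cast
      push_cast at e3
      linear_combination e1 + e2 - Complex.I * e3
end
end

section
/- Let m be a smooth function with D_s m = 0 and E m = k m for some k ∈ ℕ (a symplectic monogenic of homogeneity k). Then for every l ∈ ℕ, D_s(X_s^l m) = −i (l/2)(2k + 2n + l − 1) X_s^{l−1} m. -/
noncomputable section

open Complex Finset

namespace SympAux
variable {n : ℕ}
def vx (j : Fin n) : Pt n := (Pi.single j 1, 0, 0)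
def vy (j : Fin n) : Pt n := (0, Pi.single j 1, 0)
def vq (j : Fin n) : Pt n := (0, 0, Pi.single j 1)

def dd (v : Pt n) (f : Pt n → ℂ) : Pt n → ℂ := fun p => fderiv ℝ f p v

@[fun_prop]
lemma contDiff_dd (v : Pt n) (f : Pt n → ℂ) (hf : ContDiff ℝ (⊤ : ℕ∞) f) : ContDiff ℝ (⊤ : ℕ∞) (dd v f) :=
  (ContinuousLinearMap.apply ℝ ℂ v).contDiff.comp (hf.fderiv_right (by simp))

@[fun_prop]
lemma differentiableAt_dd (v : Pt n) (f : Pt n → ℂ) (hf : ContDiff ℝ (⊤ : ℕ∞) f) (p : Pt n) :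
    DifferentiableAt ℝ (dd v f) p :=
  ((contDiff_dd v f hf).differentiable (by simp)).differentiableAt

@[fun_prop]
lemma contDiff_ofReal' : ContDiff ℝ (⊤ : ℕ∞) Complex.ofReal := ofRealCLM.contDiff

@[fun_prop]
lemma differentiableAt_ofReal' (x : ℝ) : DifferentiableAt ℝ Complex.ofReal x :=
  ofRealCLM.differentiableAt

/-- coordinate continuous linear maps -/
def LX (j : Fin n) : Pt n →L[ℝ] ℂ :=
  ofRealCLM.comp ((ContinuousLinearMap.proj j).comp
    (ContinuousLinearMap.fst ℝ (Fin n → ℝ) ((Fin n → ℝ) × (Fin n → ℝ))))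
def LY (j : Fin n) : Pt n →L[ℝ] ℂ :=
  ofRealCLM.comp ((ContinuousLinearMap.proj j).comp
    ((ContinuousLinearMap.fst ℝ (Fin n → ℝ) (Fin n → ℝ)).comp
      (ContinuousLinearMap.snd ℝ (Fin n → ℝ) ((Fin n → ℝ) × (Fin n → ℝ)))))
def LQ (j : Fin n) : Pt n →L[ℝ] ℂ :=
  ofRealCLM.comp ((ContinuousLinearMap.proj j).comp
    ((ContinuousLinearMap.snd ℝ (Fin n → ℝ) (Fin n → ℝ)).comp
      (ContinuousLinearMap.snd ℝ (Fin n → ℝ) ((Fin n → ℝ) × (Fin n → ℝ)))))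

@[simp] lemma dd_cx (j : Fin n) (v p : Pt n) :
    dd v (fun p : Pt n => ((p.1 j : ℝ) : ℂ)) p = ((v.1 j : ℝ) : ℂ) := by
  have h : (fun p : Pt n => ((p.1 j : ℝ) : ℂ)) = LX j := rfl
  rw [dd, h, (LX j).fderiv]; rfl

@[simp] lemma dd_cy (j : Fin n) (v p : Pt n) :
    dd v (fun p : Pt n => ((p.2.1 j : ℝ) : ℂ)) p = ((v.2.1 j : ℝ) : ℂ) := by
  have h : (fun p : Pt n => ((p.2.1 j : ℝ) : ℂ)) = LY j := rfl
  rw [dd, h, (LY j).fderiv]; rfl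

@[simp] lemma dd_cq (j : Fin n) (v p : Pt n) :
    dd v (fun p : Pt n => ((p.2.2 j : ℝ) : ℂ)) p = ((v.2.2 j : ℝ) : ℂ) := by
  have h : (fun p : Pt n => ((p.2.2 j : ℝ) : ℂ)) = LQ j := rfl
  rw [dd, h, (LQ j).fderiv]; rfl

@[simp] lemma dd_const (v p : Pt n) (c : ℂ) : dd v (fun _ => c) p = 0 := by
  simp [dd]

lemma dd_add {f g : Pt n → ℂ} {p : Pt n} (hf : DifferentiableAt ℝ f p)
    (hg : DifferentiableAt ℝ g p) (v : Pt n) :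
    dd v (fun q => f q + g q) p = dd v f p + dd v g p := by
  simp [dd, fderiv_fun_add hf hg]

lemma dd_sub {f g : Pt n → ℂ} {p : Pt n} (hf : DifferentiableAt ℝ f p)
    (hg : DifferentiableAt ℝ g p) (v : Pt n) :
    dd v (fun q => f q - g q) p = dd v f p - dd v g p := by
  simp [dd, fderiv_fun_sub hf hg]

lemma dd_mul {f g : Pt n → ℂ} {p : Pt n} (hf : DifferentiableAt ℝ f p)
    (hg : DifferentiableAt ℝ g p) (v : Pt n) :
    dd v (fun q => f q * g q) p = dd v f p * g p + f p * dd v g p := by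
  simp [dd, fderiv_fun_mul hf hg]; ring

lemma dd_sum {ι : Type*} (s : Finset ι) {F : ι → Pt n → ℂ} {p : Pt n}
    (hF : ∀ k ∈ s, DifferentiableAt ℝ (F k) p) (v : Pt n) :
    dd v (fun q => ∑ k ∈ s, F k q) p = ∑ k ∈ s, dd v (F k) p := by
  simp [dd, fderiv_fun_sum hF]

lemma dd_comm (f : Pt n → ℂ) (hf : ContDiff ℝ (⊤ : ℕ∞) f) (v w p : Pt n) :
    dd v (dd w f) p = dd w (dd v f) p := by
  have hdf : DifferentiableAt ℝ (fderiv ℝ f) p :=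
    ((hf.fderiv_right (m := (⊤ : ℕ∞)) (by simp)).differentiable (by simp)).differentiableAt
  have key : ∀ u z : Pt n, dd u (dd z f) p = fderiv ℝ (fderiv ℝ f) p u z := by
    intro u z
    have h1 : dd z f = fun p => (ContinuousLinearMap.apply ℝ ℂ z) (fderiv ℝ f p) := rfl
    have h2 := ((ContinuousLinearMap.apply ℝ ℂ z).hasFDerivAt.comp p hdf.hasFDerivAt).fderiv
    calc dd u (dd z f) p
        = fderiv ℝ ((ContinuousLinearMap.apply ℝ ℂ z) ∘ (fderiv ℝ f)) p u := rfl
      _ = fderiv ℝ (fderiv ℝ f) p u z := by rw [h2]; rfl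
  rw [key, key]
  exact (hf.contDiffAt.isSymmSndFDerivAt (by
    rw [minSmoothness_of_isRCLikeNormedField]; exact WithTop.coe_le_coe.mpr le_top)) v w
lemma dd_comm_fun (f : Pt n → ℂ) (hf : ContDiff ℝ (⊤ : ℕ∞) f) (v w : Pt n) :
    dd v (dd w f) = dd w (dd v f) := funext fun p => dd_comm f hf v w p

lemma update_eq (a : Fin n → ℝ) (j : Fin n) (t : ℝ) :
    Function.update a j t = a + (t - a j) • (Pi.single j 1 : Fin n → ℝ) := by
  funext i
  rcases eq_or_ne i j with rfl | h
  · simp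
  · simp [Function.update_of_ne h, Pi.single_eq_of_ne h]

lemma deriv_along (f : Pt n → ℂ) {p : Pt n} (hf : DifferentiableAt ℝ f p) (v : Pt n) (c : ℝ)
    (γ : ℝ → Pt n) (hγ : ∀ t, γ t = p + (t - c) • v) :
    deriv (fun t => f (γ t)) c = fderiv ℝ f p v := by
  have hγ' : γ = fun t => p + (t - c) • v := funext hγ
  subst hγ'
  have hd : HasDerivAt (fun t : ℝ => p + (t - c) • v) v c := by
    simpa using (((hasDerivAt_id c).sub_const c).smul_const v).const_add p
  have hl : HasFDerivAt f (fderiv ℝ f p) ((fun t : ℝ => p + (t - c) • v) c) := by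
    simpa using hf.hasFDerivAt
  simpa [Function.comp_def] using (hl.comp_hasDerivAt c hd).deriv

lemma pdx_eq (f : Pt n → ℂ) (hf : ContDiff ℝ (⊤ : ℕ∞) f) (j : Fin n) :
    pdx n j f = dd (vx j) f := by
  funext p
  exact deriv_along f (hf.differentiable (by simp)).differentiableAt (vx j) (p.1 j) _
    (fun t => by
      show (_, _, _) = _
      rw [Prod.ext_iff, Prod.ext_iff]
      refine ⟨update_eq _ _ _, ?_, ?_⟩ <;> simp [vx])

lemma pdy_eq (f : Pt n → ℂ) (hf : ContDiff ℝ (⊤ : ℕ∞) f) (j : Fin n) :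
    pdy n j f = dd (vy j) f := by
  funext p
  exact deriv_along f (hf.differentiable (by simp)).differentiableAt (vy j) (p.2.1 j) _
    (fun t => by
      show (_, _, _) = _
      rw [Prod.ext_iff, Prod.ext_iff]
      refine ⟨?_, update_eq _ _ _, ?_⟩ <;> simp [vy])

lemma pdq_eq (f : Pt n → ℂ) (hf : ContDiff ℝ (⊤ : ℕ∞) f) (j : Fin n) :
    pdq n j f = dd (vq j) f := by
  funext p
  exact deriv_along f (hf.differentiable (by simp)).differentiableAt (vq j) (p.2.2 j) _
    (fun t => by
      show (_, _, _) = _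
      rw [Prod.ext_iff, Prod.ext_iff]
      refine ⟨?_, ?_, update_eq _ _ _⟩ <;> simp [vq])

/-- single-index pieces of the operators -/
def XsT (k : Fin n) (f : Pt n → ℂ) : Pt n → ℂ := fun p =>
  (p.2.1 k : ℂ) * dd (vq k) f p + Complex.I * (p.1 k : ℂ) * (p.2.2 k : ℂ) * f p
def DsT (j : Fin n) (f : Pt n → ℂ) : Pt n → ℂ := fun p =>
  Complex.I * (p.2.2 j : ℂ) * dd (vy j) f p - dd (vx j) (dd (vq j) f) p
def EulT (j : Fin n) (f : Pt n → ℂ) : Pt n → ℂ := fun p =>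
  (p.1 j : ℂ) * dd (vx j) f p + (p.2.1 j : ℂ) * dd (vy j) f p

@[fun_prop]
lemma contDiff_XsT (k : Fin n) (f : Pt n → ℂ) (hf : ContDiff ℝ (⊤ : ℕ∞) f) :
    ContDiff ℝ (⊤ : ℕ∞) (XsT k f) := by unfold XsT; fun_prop

@[fun_prop]
lemma contDiff_DsT (j : Fin n) (f : Pt n → ℂ) (hf : ContDiff ℝ (⊤ : ℕ∞) f) :
    ContDiff ℝ (⊤ : ℕ∞) (DsT j f) := by unfold DsT; fun_prop

@[fun_prop]
lemma contDiff_EulT (j : Fin n) (f : Pt n → ℂ) (hf : ContDiff ℝ (⊤ : ℕ∞) f) :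
    ContDiff ℝ (⊤ : ℕ∞) (EulT j f) := by unfold EulT; fun_prop

lemma Xs_eq (f : Pt n → ℂ) (hf : ContDiff ℝ (⊤ : ℕ∞) f) :
    Xs n f = fun p => ∑ k : Fin n, XsT k f p := by
  funext p; unfold Xs XsT; simp only [pdq_eq f hf]

lemma Ds_eq (f : Pt n → ℂ) (hf : ContDiff ℝ (⊤ : ℕ∞) f) :
    Ds n f = fun p => ∑ j : Fin n, DsT j f p := by
  funext p; unfold Ds DsT
  refine Finset.sum_congr rfl fun j _ => ?_
  rw [pdy_eq f hf, pdq_eq f hf, pdx_eq _ (contDiff_dd _ _ hf)]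

lemma Eul_eq (f : Pt n → ℂ) (hf : ContDiff ℝ (⊤ : ℕ∞) f) :
    Eul n f = fun p => ∑ j : Fin n, EulT j f p := by
  funext p; unfold Eul EulT; simp only [pdx_eq f hf, pdy_eq f hf]

@[fun_prop]
lemma contDiff_Xs (f : Pt n → ℂ) (hf : ContDiff ℝ (⊤ : ℕ∞) f) : ContDiff ℝ (⊤ : ℕ∞) (Xs n f) := by
  rw [Xs_eq f hf]; exact ContDiff.sum fun k _ => contDiff_XsT k f hf

@[fun_prop]
lemma contDiff_Ds (f : Pt n → ℂ) (hf : ContDiff ℝ (⊤ : ℕ∞) f) : ContDiff ℝ (⊤ : ℕ∞) (Ds n f) := by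
  rw [Ds_eq f hf]; exact ContDiff.sum fun j _ => contDiff_DsT j f hf

@[fun_prop]
lemma contDiff_Eul (f : Pt n → ℂ) (hf : ContDiff ℝ (⊤ : ℕ∞) f) : ContDiff ℝ (⊤ : ℕ∞) (Eul n f) := by
  rw [Eul_eq f hf]; exact ContDiff.sum fun j _ => contDiff_EulT j f hf

lemma XsT_sum (k : Fin n) {ι : Type*} (s : Finset ι) (G : ι → Pt n → ℂ)
    (hG : ∀ i, ContDiff ℝ (⊤ : ℕ∞) (G i)) (p : Pt n) :
    XsT k (fun q => ∑ i ∈ s, G i q) p = ∑ i ∈ s, XsT k (G i) p := by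
  unfold XsT
  rw [dd_sum s (fun i _ => ((hG i).differentiable (by simp)).differentiableAt)]
  rw [Finset.mul_sum, Finset.mul_sum, ← Finset.sum_add_distrib]

lemma DsT_sum (j : Fin n) {ι : Type*} (s : Finset ι) (G : ι → Pt n → ℂ)
    (hG : ∀ i, ContDiff ℝ (⊤ : ℕ∞) (G i)) (p : Pt n) :
    DsT j (fun q => ∑ i ∈ s, G i q) p = ∑ i ∈ s, DsT j (G i) p := by
  unfold DsT
  have h1 : dd (vq j) (fun q => ∑ i ∈ s, G i q) = fun q => ∑ i ∈ s, dd (vq j) (G i) q :=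
    funext fun q => dd_sum s (fun i _ => ((hG i).differentiable (by simp)).differentiableAt) _
  rw [h1, dd_sum s (fun i _ => differentiableAt_dd _ _ (hG i) _) (vx j),
    dd_sum s (fun i _ => ((hG i).differentiable (by simp)).differentiableAt) (vy j)]
  rw [Finset.mul_sum, ← Finset.sum_sub_distrib]

lemma EulT_sum (j : Fin n) {ι : Type*} (s : Finset ι) (G : ι → Pt n → ℂ)
    (hG : ∀ i, ContDiff ℝ (⊤ : ℕ∞) (G i)) (p : Pt n) :
    EulT j (fun q => ∑ i ∈ s, G i q) p = ∑ i ∈ s, EulT j (G i) p := by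
  unfold EulT
  rw [dd_sum s (fun i _ => ((hG i).differentiable (by simp)).differentiableAt),
    dd_sum s (fun i _ => ((hG i).differentiable (by simp)).differentiableAt)]
  rw [Finset.mul_sum, Finset.mul_sum, ← Finset.sum_add_distrib]

lemma dd_XsT (f : Pt n → ℂ) (hf : ContDiff ℝ (⊤ : ℕ∞) f) (k : Fin n) (v : Pt n) :
    dd v (XsT k f) = fun p =>
      ((v.2.1 k : ℝ) : ℂ) * dd (vq k) f p + (p.2.1 k : ℂ) * dd v (dd (vq k) f) p
      + Complex.I * ((v.1 k : ℝ) : ℂ) * (p.2.2 k : ℂ) * f p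
      + Complex.I * (p.1 k : ℂ) * ((v.2.2 k : ℝ) : ℂ) * f p
      + Complex.I * (p.1 k : ℂ) * (p.2.2 k : ℂ) * dd v f p := by
  have hd : Differentiable ℝ f := hf.differentiable (by simp)
  funext p
  unfold XsT
  simp (disch := fun_prop) only [dd_add, dd_mul, dd_cx, dd_cy, dd_cq, dd_const]
  ring

lemma dd_DsT (f : Pt n → ℂ) (hf : ContDiff ℝ (⊤ : ℕ∞) f) (j : Fin n) (v : Pt n) :
    dd v (DsT j f) = fun p =>
      Complex.I * ((v.2.2 j : ℝ) : ℂ) * dd (vy j) f p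
      + Complex.I * (p.2.2 j : ℂ) * dd v (dd (vy j) f) p
      - dd v (dd (vx j) (dd (vq j) f)) p := by
  have hd : Differentiable ℝ f := hf.differentiable (by simp)
  funext p
  unfold DsT
  simp (disch := fun_prop) only [dd_sub, dd_add, dd_mul, dd_cx, dd_cy, dd_cq, dd_const]
  ring

lemma dd_EulT (f : Pt n → ℂ) (hf : ContDiff ℝ (⊤ : ℕ∞) f) (j : Fin n) (v : Pt n) :
    dd v (EulT j f) = fun p =>
      ((v.1 j : ℝ) : ℂ) * dd (vx j) f p + (p.1 j : ℂ) * dd v (dd (vx j) f) p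
      + ((v.2.1 j : ℝ) : ℂ) * dd (vy j) f p + (p.2.1 j : ℂ) * dd v (dd (vy j) f) p := by
  have hd : Differentiable ℝ f := hf.differentiable (by simp)
  funext p
  unfold EulT
  simp (disch := fun_prop) only [dd_add, dd_mul, dd_cx, dd_cy, dd_cq, dd_const]
  ring


lemma key1 (f : Pt n → ℂ) (hf : ContDiff ℝ (⊤ : ℕ∞) f) (j k : Fin n) (p : Pt n) :
    DsT j (XsT k f) p - XsT k (DsT j f) p =
      if j = k then
        -Complex.I * (f p + (p.1 j : ℂ) * dd (vx j) f p + (p.2.1 j : ℂ) * dd (vy j) f p)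
      else 0 := by
  have hd : Differentiable ℝ f := hf.differentiable (by simp)
  show (Complex.I * (p.2.2 j : ℂ) * dd (vy j) (XsT k f) p
        - dd (vx j) (dd (vq j) (XsT k f)) p)
      - ((p.2.1 k : ℂ) * dd (vq k) (DsT j f) p
        + Complex.I * (p.1 k : ℂ) * (p.2.2 k : ℂ) * DsT j f p) = _
  rw [dd_XsT f hf k (vy j), dd_XsT f hf k (vq j), dd_DsT f hf j (vq k)]
  simp (disch := fun_prop) only [dd_add, dd_mul, dd_cx, dd_cy, dd_cq, dd_const]
  unfold DsT
  simp only [dd_comm_fun f hf (vy j) (vq k), dd_comm_fun f hf (vq j) (vq k),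
    dd_comm_fun (dd (vq j) f) (contDiff_dd _ _ hf) (vx j) (vq k),
    dd_comm_fun f hf (vx j) (vq k)]
  rcases eq_or_ne j k with rfl | hne
  · rw [if_pos rfl]
    simp only [vx, vy, vq, Pi.single_eq_same, Pi.zero_apply, Complex.ofReal_zero,
      Complex.ofReal_one]
    ring
  · rw [if_neg hne]
    simp only [vx, vy, vq, Pi.single_apply, Pi.zero_apply, Complex.ofReal_zero,
      if_neg (Ne.symm hne), if_neg hne, Complex.ofReal_one]
    ring


lemma key2 (f : Pt n → ℂ) (hf : ContDiff ℝ (⊤ : ℕ∞) f) (j k : Fin n) (p : Pt n) :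
    EulT j (XsT k f) p - XsT k (EulT j f) p = if j = k then XsT j f p else 0 := by
  have hd : Differentiable ℝ f := hf.differentiable (by simp)
  show ((p.1 j : ℂ) * dd (vx j) (XsT k f) p + (p.2.1 j : ℂ) * dd (vy j) (XsT k f) p)
      - ((p.2.1 k : ℂ) * dd (vq k) (EulT j f) p
        + Complex.I * (p.1 k : ℂ) * (p.2.2 k : ℂ) * EulT j f p) = _
  rw [dd_XsT f hf k (vx j), dd_XsT f hf k (vy j), dd_EulT f hf j (vq k)]
  unfold EulT XsT
  simp only [dd_comm_fun f hf (vx j) (vq k), dd_comm_fun f hf (vy j) (vq k)]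
  rcases eq_or_ne j k with rfl | hne
  · rw [if_pos rfl]
    simp only [vx, vy, vq, Pi.single_eq_same, Pi.zero_apply, Complex.ofReal_zero,
      Complex.ofReal_one]
    ring
  · rw [if_neg hne]
    simp only [vx, vy, vq, Pi.single_apply, Pi.zero_apply, Complex.ofReal_zero,
      if_neg (Ne.symm hne), if_neg hne, Complex.ofReal_one]
    ring

lemma comm1 (f : Pt n → ℂ) (hf : ContDiff ℝ (⊤ : ℕ∞) f) (p : Pt n) :
    Ds n (Xs n f) p = Xs n (Ds n f) p - Complex.I * (Eul n f p + (n : ℂ) * f p) := by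
  have hXs : ContDiff ℝ (⊤ : ℕ∞) (Xs n f) := contDiff_Xs f hf
  have hDsf : ContDiff ℝ (⊤ : ℕ∞) (Ds n f) := contDiff_Ds f hf
  have e1 : Ds n (Xs n f) p = ∑ j : Fin n, ∑ k : Fin n, DsT j (XsT k f) p := by
    rw [Ds_eq _ hXs]
    exact Finset.sum_congr rfl fun j _ => by
      rw [Xs_eq f hf]
      exact DsT_sum j univ _ (fun k => contDiff_XsT k f hf) p
  have e2 : Xs n (Ds n f) p = ∑ j : Fin n, ∑ k : Fin n, XsT k (DsT j f) p := by
    rw [Xs_eq _ hDsf, Finset.sum_comm]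
    exact Finset.sum_congr rfl fun k _ => by
      rw [Ds_eq f hf]
      exact XsT_sum k univ _ (fun j => contDiff_DsT j f hf) p
  have e3 : ∑ j : Fin n, ∑ k : Fin n, (DsT j (XsT k f) p - XsT k (DsT j f) p)
      = -Complex.I * (Eul n f p + (n : ℂ) * f p) := by
    have : ∀ j : Fin n, ∑ k : Fin n, (DsT j (XsT k f) p - XsT k (DsT j f) p)
        = -Complex.I * (f p + EulT j f p) := by
      intro j
      rw [Finset.sum_congr rfl fun k _ => key1 f hf j k p, Finset.sum_ite_eq]
      simp [EulT]
      ring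
    rw [Finset.sum_congr rfl fun j _ => this j, Eul_eq f hf]
    rw [← Finset.mul_sum, Finset.sum_add_distrib, Finset.sum_const, card_univ,
      Fintype.card_fin]
    simp only [nsmul_eq_mul]
    ring
  have e4 : Ds n (Xs n f) p - Xs n (Ds n f) p
      = -Complex.I * (Eul n f p + (n : ℂ) * f p) := by
    rw [e1, e2, ← e3]
    simp [Finset.sum_sub_distrib]
  linear_combination e4

lemma comm2 (f : Pt n → ℂ) (hf : ContDiff ℝ (⊤ : ℕ∞) f) (p : Pt n) :
    Eul n (Xs n f) p = Xs n (Eul n f) p + Xs n f p := by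
  have hXs : ContDiff ℝ (⊤ : ℕ∞) (Xs n f) := contDiff_Xs f hf
  have hEf : ContDiff ℝ (⊤ : ℕ∞) (Eul n f) := contDiff_Eul f hf
  have e1 : Eul n (Xs n f) p = ∑ j : Fin n, ∑ k : Fin n, EulT j (XsT k f) p := by
    rw [Eul_eq _ hXs]
    exact Finset.sum_congr rfl fun j _ => by
      rw [Xs_eq f hf]
      exact EulT_sum j univ _ (fun k => contDiff_XsT k f hf) p
  have e2 : Xs n (Eul n f) p = ∑ j : Fin n, ∑ k : Fin n, XsT k (EulT j f) p := by
    rw [Xs_eq _ hEf, Finset.sum_comm]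
    exact Finset.sum_congr rfl fun k _ => by
      rw [Eul_eq f hf]
      exact XsT_sum k univ _ (fun j => contDiff_EulT j f hf) p
  have e3 : ∑ j : Fin n, ∑ k : Fin n, (EulT j (XsT k f) p - XsT k (EulT j f) p)
      = Xs n f p := by
    rw [Finset.sum_congr rfl fun j _ => Finset.sum_congr rfl fun k _ => key2 f hf j k p]
    rw [Finset.sum_congr rfl fun j _ => Finset.sum_ite_eq univ j (fun _ => XsT j f p)]
    rw [Xs_eq f hf]
    simp
  have e4 : Eul n (Xs n f) p - Xs n (Eul n f) p = Xs n f p := by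
    rw [e1, e2, ← e3]
    simp [Finset.sum_sub_distrib]
  linear_combination e4

lemma dd_const_mul (c : ℂ) (g : Pt n → ℂ) (hg : ContDiff ℝ (⊤ : ℕ∞) g) (v p : Pt n) :
    dd v (fun q => c * g q) p = c * dd v g p := by
  have hd : Differentiable ℝ g := hg.differentiable (by simp)
  simp (disch := fun_prop) only [dd_mul, dd_const]
  ring

lemma Xs_const_mul (c : ℂ) (g : Pt n → ℂ) (hg : ContDiff ℝ (⊤ : ℕ∞) g) (p : Pt n) :
    Xs n (fun q => c * g q) p = c * Xs n g p := by
  have hcg : ContDiff ℝ (⊤ : ℕ∞) (fun q => c * g q) := contDiff_const.mul hg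
  rw [Xs_eq _ hcg, Xs_eq g hg]
  simp only [XsT, dd_const_mul c g hg]
  rw [Finset.mul_sum]
  exact Finset.sum_congr rfl fun k _ => by ring

end SympAux

open SympAux in
/-- If `m` is a symplectic monogenic of homogeneity `k` (`D_s m = 0`, `E m = k m`), then
`D_s(X_s^l m) = −i (l/2)(2k + 2n + l − 1) X_s^{l−1} m` for every `l ∈ ℕ`. -/
theorem Ds_Xs_pow_monogenic (n : ℕ) (hn : 1 ≤ n) (k : ℕ) (m : Pt n → ℂ)
    (hm : ContDiff ℝ (⊤ : ℕ∞) m) (hker : ∀ p, Ds n m p = 0)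
    (hhom : ∀ p, Eul n m p = (k : ℂ) * m p) :
    ∀ (l : ℕ) (p : Pt n), Ds n ((Xs n)^[l] m) p =
      -Complex.I * ((l : ℂ) / 2) * (2 * (k : ℂ) + 2 * n + l - 1) * (Xs n)^[l-1] m p := by
  set c : ℕ → ℂ := fun l => -Complex.I * ((l : ℂ) / 2) * (2 * (k : ℂ) + 2 * (n : ℂ) + l - 1)
    with hc
  have hsm : ∀ j : ℕ, ContDiff ℝ (⊤ : ℕ∞) ((Xs n)^[j] m) := by
    intro j
    induction j with
    | zero => simpa using hm
    | succ j ih => rw [Function.iterate_succ_apply']; exact contDiff_Xs _ ih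
  suffices H : ∀ l : ℕ, (∀ p, Eul n ((Xs n)^[l] m) p = ((k : ℂ) + l) * (Xs n)^[l] m p)
      ∧ (∀ p, Ds n ((Xs n)^[l] m) p = c l * (Xs n)^[l-1] m p) by
    intro l p
    exact (H l).2 p
  intro l
  induction l with
  | zero =>
    constructor
    · intro p; simpa using hhom p
    · intro p; simp [hc]; simpa using hker p
  | succ l ih =>
    obtain ⟨hEul, hDs⟩ := ih
    have hg : ContDiff ℝ (⊤ : ℕ∞) ((Xs n)^[l] m) := hsm l
    set g := (Xs n)^[l] m with hgdef
    have hit : (Xs n)^[l+1] m = Xs n g := Function.iterate_succ_apply' (Xs n) l m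
    constructor
    · intro p
      rw [hit, comm2 g hg p,
        show Eul n g = fun p => ((k : ℂ) + l) * g p from funext hEul,
        Xs_const_mul _ g hg p]
      push_cast
      ring
    · intro p
      rw [hit, comm1 g hg p,
        show Ds n g = fun p => c l * (Xs n)^[l-1] m p from funext hDs,
        Xs_const_mul _ _ (hsm (l-1)) p]
      have h5 : c l * Xs n ((Xs n)^[l-1] m) p = c l * g p := by
        rcases Nat.eq_zero_or_pos l with rfl | hl
        · simp [hc]
        · rw [← Function.iterate_succ_apply' (Xs n) (l-1) m,
            show (l-1).succ = l by omega]
      rw [h5, hEul p]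
      simp only [Nat.add_sub_cancel]
      rw [hc]
      push_cast
      ring
end
end

section
/- Fix j, k ∈ ℕ and α ∈ ℂ, and let m be a smooth function with D_s m = 0 and E m = k m. Define g = Σ_{l=0}^{j} 2^l α^l · binom(j,l) · ((2k+2n−1)!/(2k+2n−1+l)!) · X_s^l m (which equals j!·((2k+2n−1)!/(2k+2n−1+j)!)·L_j^{2n+2k−1}(−2α X_s) m in terms of the generalized Laguerre polynomial L_j^β). Then g satisfies the eigenvalue equation D_s g − i α (E+n) g = −i α (n+j+k) g; equivalently, with c = −i α²/2, the function e^{α X_s} g is an eigenfunction of the symplectic spin harmonic oscillator H = D_s − c X_s with eigenvalue −i α (n+j+k). -/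
noncomputable section

open Complex Finset

namespace SD
variable {n : ℕ}

def Dd (v : Pt n) (f : Pt n → ℂ) : Pt n → ℂ := fun p => fderiv ℝ f p v

def eX (i : Fin n) : Pt n := (Pi.single i 1, 0, 0)
def eY (i : Fin n) : Pt n := (0, Pi.single i 1, 0)
def eQ (i : Fin n) : Pt n := (0, 0, Pi.single i 1)

/-! coordinate CLMs -/
def cX (i : Fin n) : Pt n →L[ℝ] ℂ :=
  Complex.ofRealCLM.comp ((ContinuousLinearMap.proj i).comp
    (ContinuousLinearMap.fst ℝ (Fin n → ℝ) ((Fin n → ℝ) × (Fin n → ℝ))))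
def cY (i : Fin n) : Pt n →L[ℝ] ℂ :=
  Complex.ofRealCLM.comp (((ContinuousLinearMap.proj i).comp
    (ContinuousLinearMap.fst ℝ (Fin n → ℝ) (Fin n → ℝ))).comp
    (ContinuousLinearMap.snd ℝ (Fin n → ℝ) ((Fin n → ℝ) × (Fin n → ℝ))))
def cQ (i : Fin n) : Pt n →L[ℝ] ℂ :=
  Complex.ofRealCLM.comp (((ContinuousLinearMap.proj i).comp
    (ContinuousLinearMap.snd ℝ (Fin n → ℝ) (Fin n → ℝ))).comp
    (ContinuousLinearMap.snd ℝ (Fin n → ℝ) ((Fin n → ℝ) × (Fin n → ℝ))))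


@[fun_prop] lemma diff_ofReal' : Differentiable ℝ Complex.ofReal :=
  Complex.ofRealCLM.differentiable
@[fun_prop] lemma contDiff_ofReal' : ContDiff ℝ (⊤ : ℕ∞) Complex.ofReal :=
  Complex.ofRealCLM.contDiff

@[fun_prop] lemma diff_cX (i : Fin n) : Differentiable ℝ (fun r : Pt n => (r.1 i : ℂ)) :=
  (cX i).differentiable
@[fun_prop] lemma diff_cY (i : Fin n) : Differentiable ℝ (fun r : Pt n => (r.2.1 i : ℂ)) :=
  (cY i).differentiable
@[fun_prop] lemma diff_cQ (i : Fin n) : Differentiable ℝ (fun r : Pt n => (r.2.2 i : ℂ)) :=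
  (cQ i).differentiable
@[fun_prop] lemma smooth_cX (i : Fin n) : ContDiff ℝ (⊤ : ℕ∞) (fun r : Pt n => (r.1 i : ℂ)) :=
  (cX i).contDiff
@[fun_prop] lemma smooth_cY (i : Fin n) : ContDiff ℝ (⊤ : ℕ∞) (fun r : Pt n => (r.2.1 i : ℂ)) :=
  (cY i).contDiff
@[fun_prop] lemma smooth_cQ (i : Fin n) : ContDiff ℝ (⊤ : ℕ∞) (fun r : Pt n => (r.2.2 i : ℂ)) :=
  (cQ i).contDiff

@[fun_prop]
lemma Dd_contDiff {f : Pt n → ℂ} (v : Pt n) (hf : ContDiff ℝ (⊤ : ℕ∞) f) :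
    ContDiff ℝ (⊤ : ℕ∞) (Dd v f) :=
  (hf.fderiv_right (by simp)).clm_apply contDiff_const

@[fun_prop]
lemma Dd_diff {f : Pt n → ℂ} (v : Pt n) (hf : ContDiff ℝ (⊤ : ℕ∞) f) :
    Differentiable ℝ (Dd v f) :=
  (Dd_contDiff v hf).differentiable (by simp)

/-! Dd calculus -/
lemma Dd_add {f g : Pt n → ℂ} {p : Pt n} (hf : DifferentiableAt ℝ f p)
    (hg : DifferentiableAt ℝ g p) (v : Pt n) :
    Dd v (fun r => f r + g r) p = Dd v f p + Dd v g p := by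
  unfold Dd; rw [fderiv_fun_add hf hg]; rfl

lemma Dd_sub {f g : Pt n → ℂ} {p : Pt n} (hf : DifferentiableAt ℝ f p)
    (hg : DifferentiableAt ℝ g p) (v : Pt n) :
    Dd v (fun r => f r - g r) p = Dd v f p - Dd v g p := by
  unfold Dd; rw [fderiv_fun_sub hf hg]; rfl

lemma Dd_mul {f g : Pt n → ℂ} {p : Pt n} (hf : DifferentiableAt ℝ f p)
    (hg : DifferentiableAt ℝ g p) (v : Pt n) :
    Dd v (fun r => f r * g r) p = f p * Dd v g p + Dd v f p * g p := by
  unfold Dd; rw [fderiv_fun_mul hf hg]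
  simp [smul_eq_mul, mul_comm]

lemma Dd_const_mul {f : Pt n → ℂ} {p : Pt n} (hf : DifferentiableAt ℝ f p) (c : ℂ) (v : Pt n) :
    Dd v (fun r => c * f r) p = c * Dd v f p := by
  unfold Dd; rw [fderiv_const_mul hf]; simp [smul_eq_mul]

lemma Dd_const (c : ℂ) (v : Pt n) (p : Pt n) : Dd v (fun _ => c) p = 0 := by
  unfold Dd; rw [fderiv_const_apply]; rfl

lemma Dd_sum {ι : Type*} (s : Finset ι) (F : ι → Pt n → ℂ) {p : Pt n}
    (hF : ∀ a ∈ s, DifferentiableAt ℝ (F a) p) (v : Pt n) :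
    Dd v (fun r => ∑ a ∈ s, F a r) p = ∑ a ∈ s, Dd v (F a) p := by
  unfold Dd; rw [fderiv_fun_sum hF]; simp

lemma Dd_cX (i : Fin n) (v p : Pt n) : Dd v (fun r => (r.1 i : ℂ)) p = (v.1 i : ℂ) := by
  unfold Dd
  rw [show (fun r : Pt n => (r.1 i : ℂ)) = cX i from rfl, ContinuousLinearMap.fderiv]; rfl
lemma Dd_cY (i : Fin n) (v p : Pt n) : Dd v (fun r => (r.2.1 i : ℂ)) p = (v.2.1 i : ℂ) := by
  unfold Dd
  rw [show (fun r : Pt n => (r.2.1 i : ℂ)) = cY i from rfl, ContinuousLinearMap.fderiv]; rfl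
lemma Dd_cQ (i : Fin n) (v p : Pt n) : Dd v (fun r => (r.2.2 i : ℂ)) p = (v.2.2 i : ℂ) := by
  unfold Dd
  rw [show (fun r : Pt n => (r.2.2 i : ℂ)) = cQ i from rfl, ContinuousLinearMap.fderiv]; rfl

/-! coordinates of basis directions, as ℂ casts -/
@[simp] lemma eX_x (i a : Fin n) : (((eX i).1 a : ℝ) : ℂ) = if a = i then 1 else 0 := by
  simp [eX, Pi.single_apply]; split <;> simp
@[simp] lemma eX_y (i a : Fin n) : (((eX i).2.1 a : ℝ) : ℂ) = 0 := by simp [eX]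
@[simp] lemma eX_q (i a : Fin n) : (((eX i).2.2 a : ℝ) : ℂ) = 0 := by simp [eX]
@[simp] lemma eY_x (i a : Fin n) : (((eY i).1 a : ℝ) : ℂ) = 0 := by simp [eY]
@[simp] lemma eY_y (i a : Fin n) : (((eY i).2.1 a : ℝ) : ℂ) = if a = i then 1 else 0 := by
  simp [eY, Pi.single_apply]; split <;> simp
@[simp] lemma eY_q (i a : Fin n) : (((eY i).2.2 a : ℝ) : ℂ) = 0 := by simp [eY]
@[simp] lemma eQ_x (i a : Fin n) : (((eQ i).1 a : ℝ) : ℂ) = 0 := by simp [eQ]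
@[simp] lemma eQ_y (i a : Fin n) : (((eQ i).2.1 a : ℝ) : ℂ) = 0 := by simp [eQ]
@[simp] lemma eQ_q (i a : Fin n) : (((eQ i).2.2 a : ℝ) : ℂ) = if a = i then 1 else 0 := by
  simp [eQ, Pi.single_apply]; split <;> simp


lemma deriv_slice (f : Pt n → ℂ) (p v : Pt n) (c : ℝ)
    (hf : DifferentiableAt ℝ f p) (g : ℝ → Pt n) (hg : ∀ t, g t = p + (t - c) • v) :
    deriv (fun t => f (g t)) c = Dd v f p := by
  have hgc : g c = p := by rw [hg]; simp
  have hL : HasDerivAt g v c := by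
    have h1 : HasDerivAt (fun t : ℝ => t - c) 1 c := (hasDerivAt_id c).sub_const c
    have h2 := (h1.smul_const v).const_add p
    simp only [one_smul] at h2
    have : (fun t : ℝ => p + (t - c) • v) = g := by funext t; rw [hg]
    rwa [this] at h2
  have hF : HasFDerivAt f (fderiv ℝ f p) (g c) := by rw [hgc]; exact hf.hasFDerivAt
  exact (hF.comp_hasDerivAt c hL).deriv

lemma pdx_eq (i : Fin n) (f : Pt n → ℂ) (p : Pt n) (hf : DifferentiableAt ℝ f p) :
    pdx n i f p = Dd (eX i) f p := by
  refine deriv_slice f p (eX i) (p.1 i) hf _ fun t => ?_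
  refine Prod.ext (funext fun a => ?_) (Prod.ext ?_ ?_)
  · by_cases h : a = i
    · subst h; simp [eX, Function.update_self]
    · simp [eX, Function.update_of_ne h, Pi.single_apply, h]
  · simp [eX]
  · simp [eX]

lemma pdy_eq (i : Fin n) (f : Pt n → ℂ) (p : Pt n) (hf : DifferentiableAt ℝ f p) :
    pdy n i f p = Dd (eY i) f p := by
  refine deriv_slice f p (eY i) (p.2.1 i) hf _ fun t => ?_
  refine Prod.ext ?_ (Prod.ext (funext fun a => ?_) ?_)
  · simp [eY]
  · by_cases h : a = i
    · subst h; simp [eY, Function.update_self]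
    · simp [eY, Function.update_of_ne h, Pi.single_apply, h]
  · simp [eY]

lemma pdq_eq (i : Fin n) (f : Pt n → ℂ) (p : Pt n) (hf : DifferentiableAt ℝ f p) :
    pdq n i f p = Dd (eQ i) f p := by
  refine deriv_slice f p (eQ i) (p.2.2 i) hf _ fun t => ?_
  refine Prod.ext ?_ (Prod.ext ?_ (funext fun a => ?_))
  · simp [eQ]
  · simp [eQ]
  · by_cases h : a = i
    · subst h; simp [eQ, Function.update_self]
    · simp [eQ, Function.update_of_ne h, Pi.single_apply, h]

/-- Schwarz symmetry -/
lemma Dd_comm {f : Pt n → ℂ} (hf : ContDiff ℝ (⊤ : ℕ∞) f) (v w : Pt n) (p : Pt n) :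
    Dd v (Dd w f) p = Dd w (Dd v f) p := by
  have hd : DifferentiableAt ℝ (fderiv ℝ f) p :=
    ((hf.fderiv_right (m := (⊤ : ℕ∞)) (by simp)).differentiable (by simp)).differentiableAt
  have key : ∀ u₁ u₂ : Pt n, Dd u₁ (Dd u₂ f) p = fderiv ℝ (fderiv ℝ f) p u₁ u₂ := by
    intro u₁ u₂
    have h1 : HasFDerivAt (fun q => (fderiv ℝ f q) u₂)
        ((ContinuousLinearMap.apply ℝ ℂ u₂).comp (fderiv ℝ (fderiv ℝ f) p)) p :=
      (ContinuousLinearMap.apply ℝ ℂ u₂).hasFDerivAt.comp p hd.hasFDerivAt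
    have := h1.fderiv
    unfold Dd
    rw [this]; rfl
  rw [key, key]
  exact (hf.contDiffAt.isSymmSndFDerivAt (by rw [minSmoothness_of_isRCLikeNormedField]; exact WithTop.coe_le_coe.mpr (le_top : (2 : ℕ∞) ≤ ⊤))) v w

end SD

namespace SD
variable {n : ℕ}

/-! summand functions -/
def Bf (a : Fin n) (f : Pt n → ℂ) : Pt n → ℂ := fun r =>
  (r.2.1 a : ℂ) * Dd (eQ a) f r + Complex.I * (r.1 a : ℂ) * (r.2.2 a : ℂ) * f r
def Af (i : Fin n) (f : Pt n → ℂ) : Pt n → ℂ := fun r =>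
  Complex.I * (r.2.2 i : ℂ) * Dd (eY i) f r - Dd (eX i) (Dd (eQ i) f) r
def Cf (i : Fin n) (f : Pt n → ℂ) : Pt n → ℂ := fun r =>
  (r.1 i : ℂ) * Dd (eX i) f r + (r.2.1 i : ℂ) * Dd (eY i) f r

@[fun_prop] lemma smooth_Bf {f : Pt n → ℂ} (hf : ContDiff ℝ (⊤ : ℕ∞) f) (a : Fin n) :
    ContDiff ℝ (⊤ : ℕ∞) (Bf a f) := by unfold Bf; fun_prop
@[fun_prop] lemma smooth_Af {f : Pt n → ℂ} (hf : ContDiff ℝ (⊤ : ℕ∞) f) (i : Fin n) :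
    ContDiff ℝ (⊤ : ℕ∞) (Af i f) := by unfold Af; fun_prop
@[fun_prop] lemma smooth_Cf {f : Pt n → ℂ} (hf : ContDiff ℝ (⊤ : ℕ∞) f) (i : Fin n) :
    ContDiff ℝ (⊤ : ℕ∞) (Cf i f) := by unfold Cf; fun_prop

/-! operators in terms of Dd -/
lemma Xs_eq {f : Pt n → ℂ} (hf : ContDiff ℝ (⊤ : ℕ∞) f) :
    Xs n f = fun p => ∑ a : Fin n, Bf a f p := by
  funext p
  unfold Xs Bf
  refine Finset.sum_congr rfl fun a _ => ?_
  rw [pdq_eq a f p ((hf.differentiable (by simp)).differentiableAt)]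

lemma Ds_eq {f : Pt n → ℂ} (hf : ContDiff ℝ (⊤ : ℕ∞) f) :
    Ds n f = fun p => ∑ i : Fin n, Af i f p := by
  funext p
  unfold Ds Af
  refine Finset.sum_congr rfl fun i _ => ?_
  have h1 : pdq n i f = Dd (eQ i) f := by
    funext r; exact pdq_eq i f r ((hf.differentiable (by simp)).differentiableAt)
  rw [pdy_eq i f p ((hf.differentiable (by simp)).differentiableAt), h1,
    pdx_eq i _ p ((Dd_diff (eQ i) hf).differentiableAt)]

lemma Eul_eq {f : Pt n → ℂ} (hf : ContDiff ℝ (⊤ : ℕ∞) f) :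
    Eul n f = fun p => ∑ i : Fin n, Cf i f p := by
  funext p
  unfold Eul Cf
  refine Finset.sum_congr rfl fun i _ => ?_
  rw [pdx_eq i f p ((hf.differentiable (by simp)).differentiableAt),
    pdy_eq i f p ((hf.differentiable (by simp)).differentiableAt)]

@[fun_prop] lemma smooth_Xs {f : Pt n → ℂ} (hf : ContDiff ℝ (⊤ : ℕ∞) f) :
    ContDiff ℝ (⊤ : ℕ∞) (Xs n f) := by
  rw [Xs_eq hf]
  exact ContDiff.sum fun a _ => smooth_Bf hf a

end SD

namespace SD
variable {n : ℕ}

/-- Expansion of a directional derivative of `Bf a f`. -/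
lemma Dd_Bf {f : Pt n → ℂ} (hf : ContDiff ℝ (⊤ : ℕ∞) f) (a : Fin n) (v r : Pt n) :
    Dd v (Bf a f) r =
      (v.2.1 a : ℂ) * Dd (eQ a) f r + (r.2.1 a : ℂ) * Dd v (Dd (eQ a) f) r
      + Complex.I * (v.1 a : ℂ) * (r.2.2 a : ℂ) * f r
      + Complex.I * (r.1 a : ℂ) * (v.2.2 a : ℂ) * f r
      + Complex.I * (r.1 a : ℂ) * (r.2.2 a : ℂ) * Dd v f r := by
  have hDf : Differentiable ℝ f := hf.differentiable (by simp)
  have hQa : Differentiable ℝ (Dd (eQ a) f) := Dd_diff _ hf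
  unfold Bf
  rw [Dd_add (by fun_prop) (by fun_prop), Dd_mul (by fun_prop) (by fun_prop),
    Dd_mul (by fun_prop) (by fun_prop), Dd_mul (by fun_prop) (by fun_prop),
    Dd_const_mul (by fun_prop), Dd_cX, Dd_cY, Dd_cQ]
  ring

/-- Expansion of a directional derivative of `Af i f`. -/
lemma Dd_Af {f : Pt n → ℂ} (hf : ContDiff ℝ (⊤ : ℕ∞) f) (i : Fin n) (v r : Pt n) :
    Dd v (Af i f) r =
      Complex.I * (v.2.2 i : ℂ) * Dd (eY i) f r
      + Complex.I * (r.2.2 i : ℂ) * Dd v (Dd (eY i) f) r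
      - Dd v (Dd (eX i) (Dd (eQ i) f)) r := by
  have hYi : Differentiable ℝ (Dd (eY i) f) := Dd_diff _ hf
  have hXQ : Differentiable ℝ (Dd (eX i) (Dd (eQ i) f)) :=
    Dd_diff _ (Dd_contDiff _ hf)
  unfold Af
  rw [Dd_sub (by fun_prop) (by fun_prop), Dd_mul (by fun_prop) (by fun_prop),
    Dd_const_mul (by fun_prop), Dd_cQ]
  ring

/-- Expansion of a directional derivative of `Cf i f`. -/
lemma Dd_Cf {f : Pt n → ℂ} (hf : ContDiff ℝ (⊤ : ℕ∞) f) (i : Fin n) (v r : Pt n) :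
    Dd v (Cf i f) r =
      (v.1 i : ℂ) * Dd (eX i) f r + (r.1 i : ℂ) * Dd v (Dd (eX i) f) r
      + (v.2.1 i : ℂ) * Dd (eY i) f r + (r.2.1 i : ℂ) * Dd v (Dd (eY i) f) r := by
  have hXi : Differentiable ℝ (Dd (eX i) f) := Dd_diff _ hf
  have hYi : Differentiable ℝ (Dd (eY i) f) := Dd_diff _ hf
  unfold Cf
  rw [Dd_add (by fun_prop) (by fun_prop), Dd_mul (by fun_prop) (by fun_prop),
    Dd_mul (by fun_prop) (by fun_prop), Dd_cX, Dd_cY]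
  ring

end SD

namespace SD
variable {n : ℕ}

/-- Per-term commutator identity for `[Ds, Xs]`. -/
lemma key1 {f : Pt n → ℂ} (hf : ContDiff ℝ (⊤ : ℕ∞) f) (i a : Fin n) (p : Pt n) :
    Complex.I * (p.2.2 i : ℂ) * Dd (eY i) (Bf a f) p
      - Dd (eX i) (Dd (eQ i) (Bf a f)) p
      - ((p.2.1 a : ℂ) * Dd (eQ a) (Af i f) p
        + Complex.I * (p.1 a : ℂ) * (p.2.2 a : ℂ) * Af i f p)
    = if a = i then
        -Complex.I * (f p + (p.1 i : ℂ) * Dd (eX i) f p + (p.2.1 i : ℂ) * Dd (eY i) f p)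
      else 0 := by
  have hDf : Differentiable ℝ f := hf.differentiable (by simp)
  have hQa : ContDiff ℝ (⊤ : ℕ∞) (Dd (eQ a) f) := Dd_contDiff _ hf
  have hQi : ContDiff ℝ (⊤ : ℕ∞) (Dd (eQ i) f) := Dd_contDiff _ hf
  have hYi : ContDiff ℝ (⊤ : ℕ∞) (Dd (eY i) f) := Dd_contDiff _ hf
  have hQiQa : Differentiable ℝ (Dd (eQ i) (Dd (eQ a) f)) := Dd_diff _ hQa
  have hQid : Differentiable ℝ (Dd (eQ i) f) := hQi.differentiable (by simp)
  have hYB := Dd_Bf hf a (eY i) p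
  simp only [eY_x, eY_y, eY_q] at hYB
  have hQB : Dd (eQ i) (Bf a f) = fun r =>
      (r.2.1 a : ℂ) * Dd (eQ i) (Dd (eQ a) f) r
      + Complex.I * (r.1 a : ℂ) * ((if a = i then (1:ℂ) else 0) * f r)
      + Complex.I * (r.1 a : ℂ) * ((r.2.2 a : ℂ) * Dd (eQ i) f r) := by
    funext r
    rw [Dd_Bf hf a (eQ i) r]
    simp only [eQ_x, eQ_y, eQ_q]
    ring
  have hQA := Dd_Af hf i (eQ a) p
  simp only [eQ_x, eQ_y, eQ_q] at hQA
  have hA : Af i f p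
      = Complex.I * (p.2.2 i : ℂ) * Dd (eY i) f p - Dd (eX i) (Dd (eQ i) f) p := rfl
  rw [hYB, hQB, hQA, hA]
  simp (disch := fun_prop) only
    [Dd_add, Dd_mul, Dd_const_mul, Dd_cX, Dd_cY, Dd_cQ, Dd_const, eX_x, eX_y, eX_q]
  have s1 : Dd (eQ a) (Dd (eY i) f) p = Dd (eY i) (Dd (eQ a) f) p := Dd_comm hf _ _ p
  have s2 : Dd (eQ a) (Dd (eX i) (Dd (eQ i) f)) p
      = Dd (eX i) (Dd (eQ i) (Dd (eQ a) f)) p := by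
    rw [Dd_comm hQi (eQ a) (eX i) p,
      show Dd (eQ a) (Dd (eQ i) f) = Dd (eQ i) (Dd (eQ a) f) from
        funext fun r => Dd_comm hf _ _ r]
  rw [s1, s2]
  by_cases hai : a = i
  · subst hai; simp; ring
  · simp [hai, Ne.symm hai]; ring

/-- Per-term commutator identity for `[Eul, Xs]`. -/
lemma key2 {f : Pt n → ℂ} (hf : ContDiff ℝ (⊤ : ℕ∞) f) (i a : Fin n) (p : Pt n) :
    (p.1 i : ℂ) * Dd (eX i) (Bf a f) p + (p.2.1 i : ℂ) * Dd (eY i) (Bf a f) p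
      - ((p.2.1 a : ℂ) * Dd (eQ a) (Cf i f) p
        + Complex.I * (p.1 a : ℂ) * (p.2.2 a : ℂ) * Cf i f p)
    = if a = i then Bf a f p else 0 := by
  have hDf : Differentiable ℝ f := hf.differentiable (by simp)
  have hQa : ContDiff ℝ (⊤ : ℕ∞) (Dd (eQ a) f) := Dd_contDiff _ hf
  have hXi : ContDiff ℝ (⊤ : ℕ∞) (Dd (eX i) f) := Dd_contDiff _ hf
  have hYi : ContDiff ℝ (⊤ : ℕ∞) (Dd (eY i) f) := Dd_contDiff _ hf
  have hXB := Dd_Bf hf a (eX i) p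
  simp only [eX_x, eX_y, eX_q] at hXB
  have hYB := Dd_Bf hf a (eY i) p
  simp only [eY_x, eY_y, eY_q] at hYB
  have hQC := Dd_Cf hf i (eQ a) p
  simp only [eQ_x, eQ_y, eQ_q] at hQC
  have hC : Cf i f p
      = (p.1 i : ℂ) * Dd (eX i) f p + (p.2.1 i : ℂ) * Dd (eY i) f p := rfl
  rw [hXB, hYB, hQC, hC]
  have s1 : Dd (eQ a) (Dd (eX i) f) p = Dd (eX i) (Dd (eQ a) f) p := Dd_comm hf _ _ p
  have s2 : Dd (eQ a) (Dd (eY i) f) p = Dd (eY i) (Dd (eQ a) f) p := Dd_comm hf _ _ p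
  rw [s1, s2]
  by_cases hai : a = i
  · subst hai; simp [Bf]; ring
  · simp [hai, Ne.symm hai]; ring

end SD

namespace SD
variable {n : ℕ}

lemma smooth_Ds {f : Pt n → ℂ} (hf : ContDiff ℝ (⊤ : ℕ∞) f) : ContDiff ℝ (⊤ : ℕ∞) (Ds n f) := by
  rw [Ds_eq hf]; exact ContDiff.sum fun i _ => smooth_Af hf i

lemma smooth_Eul {f : Pt n → ℂ} (hf : ContDiff ℝ (⊤ : ℕ∞) f) : ContDiff ℝ (⊤ : ℕ∞) (Eul n f) := by
  rw [Eul_eq hf]; exact ContDiff.sum fun i _ => smooth_Cf hf i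

lemma Xs_zero (p : Pt n) : Xs n (fun _ => (0 : ℂ)) p = 0 := by
  simp [Xs, pdq]

lemma Xs_const_mul {f : Pt n → ℂ} (hf : ContDiff ℝ (⊤ : ℕ∞) f) (c : ℂ) (p : Pt n) :
    Xs n (fun r => c * f r) p = c * Xs n f p := by
  have hcf : ContDiff ℝ (⊤ : ℕ∞) (fun r => c * f r) := contDiff_const.mul hf
  rw [Xs_eq hcf, Xs_eq hf, Finset.mul_sum]
  refine Finset.sum_congr rfl fun a _ => ?_
  unfold Bf
  rw [Dd_const_mul ((hf.differentiable (by simp)).differentiableAt) c]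
  ring

/-- operator commutator: `Ds (Xs f) = Xs (Ds f) - I • EN f` -/
lemma comm1 {f : Pt n → ℂ} (hf : ContDiff ℝ (⊤ : ℕ∞) f) (p : Pt n) :
    Ds n (Xs n f) p = Xs n (Ds n f) p - Complex.I * EN n f p := by
  have hBf : ∀ a : Fin n, ContDiff ℝ (⊤ : ℕ∞) (Bf a f) := fun a => smooth_Bf hf a
  have hAf : ∀ i : Fin n, ContDiff ℝ (⊤ : ℕ∞) (Af i f) := fun i => smooth_Af hf i
  have hXsum : Xs n f = fun r => ∑ a : Fin n, Bf a f r := Xs_eq hf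
  have hDsum : Ds n f = fun r => ∑ i : Fin n, Af i f r := Ds_eq hf
  have hL : Ds n (Xs n f) p = ∑ i : Fin n, ∑ a : Fin n,
      (Complex.I * (p.2.2 i : ℂ) * Dd (eY i) (Bf a f) p
        - Dd (eX i) (Dd (eQ i) (Bf a f)) p) := by
    rw [Ds_eq (smooth_Xs hf)]
    refine Finset.sum_congr rfl fun i _ => ?_
    have h1 : Dd (eY i) (Xs n f) p = ∑ a : Fin n, Dd (eY i) (Bf a f) p := by
      rw [hXsum]
      exact Dd_sum _ _ (fun a _ => (((hBf a).differentiable (by simp)).differentiableAt)) _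
    have h2 : Dd (eQ i) (Xs n f) = fun r => ∑ a : Fin n, Dd (eQ i) (Bf a f) r := by
      funext r
      rw [hXsum]
      exact Dd_sum _ _ (fun a _ => (((hBf a).differentiable (by simp)).differentiableAt)) _
    have h3 : Dd (eX i) (Dd (eQ i) (Xs n f)) p
        = ∑ a : Fin n, Dd (eX i) (Dd (eQ i) (Bf a f)) p := by
      rw [h2]
      exact Dd_sum _ _ (fun a _ => ((Dd_diff _ (hBf a)).differentiableAt)) _
    show Complex.I * (p.2.2 i : ℂ) * Dd (eY i) (Xs n f) p
        - Dd (eX i) (Dd (eQ i) (Xs n f)) p = _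
    rw [h1, h3, Finset.mul_sum, ← Finset.sum_sub_distrib]
  have hR : Xs n (Ds n f) p = ∑ i : Fin n, ∑ a : Fin n,
      ((p.2.1 a : ℂ) * Dd (eQ a) (Af i f) p
        + Complex.I * (p.1 a : ℂ) * (p.2.2 a : ℂ) * Af i f p) := by
    rw [Xs_eq (smooth_Ds hf), Finset.sum_comm]
    refine Finset.sum_congr rfl fun a _ => ?_
    have h1 : Dd (eQ a) (Ds n f) p = ∑ i : Fin n, Dd (eQ a) (Af i f) p := by
      rw [hDsum]
      exact Dd_sum _ _ (fun i _ => (((hAf i).differentiable (by simp)).differentiableAt)) _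
    have h2 : Ds n f p = ∑ i : Fin n, Af i f p := by rw [hDsum]
    show (p.2.1 a : ℂ) * Dd (eQ a) (Ds n f) p
        + Complex.I * (p.1 a : ℂ) * (p.2.2 a : ℂ) * Ds n f p = _
    rw [h1, h2, Finset.mul_sum, Finset.mul_sum, ← Finset.sum_add_distrib]
  have hstep : Ds n (Xs n f) p - Xs n (Ds n f) p
      = ∑ i : Fin n, -Complex.I *
          (f p + (p.1 i : ℂ) * Dd (eX i) f p + (p.2.1 i : ℂ) * Dd (eY i) f p) := by
    rw [hL, hR, ← Finset.sum_sub_distrib]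
    refine Finset.sum_congr rfl fun i _ => ?_
    rw [← Finset.sum_sub_distrib]
    have : ∀ a : Fin n, a ∈ (univ : Finset (Fin n)) →
        (Complex.I * (p.2.2 i : ℂ) * Dd (eY i) (Bf a f) p
          - Dd (eX i) (Dd (eQ i) (Bf a f)) p)
        - ((p.2.1 a : ℂ) * Dd (eQ a) (Af i f) p
          + Complex.I * (p.1 a : ℂ) * (p.2.2 a : ℂ) * Af i f p)
        = if a = i then -Complex.I *
            (f p + (p.1 i : ℂ) * Dd (eX i) f p + (p.2.1 i : ℂ) * Dd (eY i) f p)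
          else 0 := fun a _ => key1 hf i a p
    rw [Finset.sum_congr rfl this, Finset.sum_ite_eq' univ i, if_pos (mem_univ i)]
  have h1 : Eul n f p = ∑ i : Fin n,
      ((p.1 i : ℂ) * Dd (eX i) f p + (p.2.1 i : ℂ) * Dd (eY i) f p) := by
    rw [Eul_eq hf]
    rfl
  have hsum : ∑ i : Fin n, -Complex.I *
      (f p + (p.1 i : ℂ) * Dd (eX i) f p + (p.2.1 i : ℂ) * Dd (eY i) f p)
      = -(Complex.I * EN n f p) := by
    unfold EN
    rw [h1, ← Finset.mul_sum, Finset.sum_add_distrib, Finset.sum_add_distrib,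
      Finset.sum_const, Finset.card_univ, Fintype.card_fin, nsmul_eq_mul,
      Finset.sum_add_distrib]
    ring
  calc Ds n (Xs n f) p
      = Xs n (Ds n f) p + ∑ i : Fin n, -Complex.I *
        (f p + (p.1 i : ℂ) * Dd (eX i) f p + (p.2.1 i : ℂ) * Dd (eY i) f p) := by
        rw [← hstep]; ring
    _ = Xs n (Ds n f) p - Complex.I * EN n f p := by rw [hsum]; ring

/-- operator commutator: `Eul (Xs f) = Xs (Eul f) + Xs f` -/
lemma comm2 {f : Pt n → ℂ} (hf : ContDiff ℝ (⊤ : ℕ∞) f) (p : Pt n) :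
    Eul n (Xs n f) p = Xs n (Eul n f) p + Xs n f p := by
  have hBf : ∀ a : Fin n, ContDiff ℝ (⊤ : ℕ∞) (Bf a f) := fun a => smooth_Bf hf a
  have hCf : ∀ i : Fin n, ContDiff ℝ (⊤ : ℕ∞) (Cf i f) := fun i => smooth_Cf hf i
  have hXsum : Xs n f = fun r => ∑ a : Fin n, Bf a f r := Xs_eq hf
  have hEsum : Eul n f = fun r => ∑ i : Fin n, Cf i f r := Eul_eq hf
  have hL : Eul n (Xs n f) p = ∑ i : Fin n, ∑ a : Fin n,
      ((p.1 i : ℂ) * Dd (eX i) (Bf a f) p + (p.2.1 i : ℂ) * Dd (eY i) (Bf a f) p) := by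
    rw [Eul_eq (smooth_Xs hf)]
    refine Finset.sum_congr rfl fun i _ => ?_
    have h1 : Dd (eX i) (Xs n f) p = ∑ a : Fin n, Dd (eX i) (Bf a f) p := by
      rw [hXsum]
      exact Dd_sum _ _ (fun a _ => (((hBf a).differentiable (by simp)).differentiableAt)) _
    have h2 : Dd (eY i) (Xs n f) p = ∑ a : Fin n, Dd (eY i) (Bf a f) p := by
      rw [hXsum]
      exact Dd_sum _ _ (fun a _ => (((hBf a).differentiable (by simp)).differentiableAt)) _
    show (p.1 i : ℂ) * Dd (eX i) (Xs n f) p + (p.2.1 i : ℂ) * Dd (eY i) (Xs n f) p = _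
    rw [h1, h2, Finset.mul_sum, Finset.mul_sum, ← Finset.sum_add_distrib]
  have hR : Xs n (Eul n f) p = ∑ i : Fin n, ∑ a : Fin n,
      ((p.2.1 a : ℂ) * Dd (eQ a) (Cf i f) p
        + Complex.I * (p.1 a : ℂ) * (p.2.2 a : ℂ) * Cf i f p) := by
    rw [Xs_eq (smooth_Eul hf), Finset.sum_comm]
    refine Finset.sum_congr rfl fun a _ => ?_
    have h1 : Dd (eQ a) (Eul n f) p = ∑ i : Fin n, Dd (eQ a) (Cf i f) p := by
      rw [hEsum]
      exact Dd_sum _ _ (fun i _ => (((hCf i).differentiable (by simp)).differentiableAt)) _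
    have h2 : Eul n f p = ∑ i : Fin n, Cf i f p := by rw [hEsum]
    show (p.2.1 a : ℂ) * Dd (eQ a) (Eul n f) p
        + Complex.I * (p.1 a : ℂ) * (p.2.2 a : ℂ) * Eul n f p = _
    rw [h1, h2, Finset.mul_sum, Finset.mul_sum, ← Finset.sum_add_distrib]
  have hstep : Eul n (Xs n f) p - Xs n (Eul n f) p = ∑ i : Fin n, Bf i f p := by
    rw [hL, hR, ← Finset.sum_sub_distrib]
    refine Finset.sum_congr rfl fun i _ => ?_
    rw [← Finset.sum_sub_distrib]
    have : ∀ a : Fin n, a ∈ (univ : Finset (Fin n)) →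
        ((p.1 i : ℂ) * Dd (eX i) (Bf a f) p + (p.2.1 i : ℂ) * Dd (eY i) (Bf a f) p)
        - ((p.2.1 a : ℂ) * Dd (eQ a) (Cf i f) p
          + Complex.I * (p.1 a : ℂ) * (p.2.2 a : ℂ) * Cf i f p)
        = if a = i then Bf a f p else 0 := fun a _ => key2 hf i a p
    rw [Finset.sum_congr rfl this]
    simp
  have hXv : Xs n f p = ∑ a : Fin n, Bf a f p := by rw [hXsum]
  calc Eul n (Xs n f) p = Xs n (Eul n f) p + ∑ i : Fin n, Bf i f p := by
        rw [← hstep]; ring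
    _ = Xs n (Eul n f) p + Xs n f p := by rw [hXv]

end SD

namespace SD
variable {n : ℕ}

lemma Ds_lin (s : Finset ℕ) (c : ℕ → ℂ) (F : ℕ → Pt n → ℂ)
    (hF : ∀ l, ContDiff ℝ (⊤ : ℕ∞) (F l)) (p : Pt n) :
    Ds n (fun r => ∑ l ∈ s, c l * F l r) p = ∑ l ∈ s, c l * Ds n (F l) p := by
  have hsum : ContDiff ℝ (⊤ : ℕ∞) (fun r : Pt n => ∑ l ∈ s, c l * F l r) :=
    ContDiff.sum fun l _ => contDiff_const.mul (hF l)
  rw [Ds_eq hsum]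
  show ∑ i : Fin n, Af i (fun r => ∑ l ∈ s, c l * F l r) p = _
  have hper : ∀ i : Fin n, Af i (fun r => ∑ l ∈ s, c l * F l r) p
      = ∑ l ∈ s, c l * Af i (F l) p := by
    intro i
    have e1 : Dd (eY i) (fun r => ∑ l ∈ s, c l * F l r) p
        = ∑ l ∈ s, c l * Dd (eY i) (F l) p := by
      rw [Dd_sum s _ (fun l _ =>
        ((((hF l).differentiable (by simp)).const_mul (c l)).differentiableAt)) _]
      exact Finset.sum_congr rfl fun l _ =>
        Dd_const_mul (((hF l).differentiable (by simp)).differentiableAt) _ _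
    have e2 : Dd (eQ i) (fun r => ∑ l ∈ s, c l * F l r)
        = fun r => ∑ l ∈ s, c l * Dd (eQ i) (F l) r := by
      funext r
      rw [Dd_sum s _ (fun l _ =>
        ((((hF l).differentiable (by simp)).const_mul (c l)).differentiableAt)) _]
      exact Finset.sum_congr rfl fun l _ =>
        Dd_const_mul (((hF l).differentiable (by simp)).differentiableAt) _ _
    have e3 : Dd (eX i) (Dd (eQ i) (fun r => ∑ l ∈ s, c l * F l r)) p
        = ∑ l ∈ s, c l * Dd (eX i) (Dd (eQ i) (F l)) p := by
      rw [e2, Dd_sum s _ (fun l _ =>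
        (((Dd_diff (eQ i) (hF l)).const_mul (c l)).differentiableAt)) _]
      exact Finset.sum_congr rfl fun l _ =>
        Dd_const_mul ((Dd_diff (eQ i) (hF l)).differentiableAt) _ _
    show Complex.I * (p.2.2 i : ℂ) * Dd (eY i) (fun r => ∑ l ∈ s, c l * F l r) p
        - Dd (eX i) (Dd (eQ i) (fun r => ∑ l ∈ s, c l * F l r)) p = _
    rw [e1, e3, Finset.mul_sum, ← Finset.sum_sub_distrib]
    exact Finset.sum_congr rfl fun l _ => by unfold Af; ring
  rw [Finset.sum_congr rfl fun i _ => hper i, Finset.sum_comm]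
  refine Finset.sum_congr rfl fun l _ => ?_
  rw [Ds_eq (hF l), Finset.mul_sum]

lemma Eul_lin (s : Finset ℕ) (c : ℕ → ℂ) (F : ℕ → Pt n → ℂ)
    (hF : ∀ l, ContDiff ℝ (⊤ : ℕ∞) (F l)) (p : Pt n) :
    Eul n (fun r => ∑ l ∈ s, c l * F l r) p = ∑ l ∈ s, c l * Eul n (F l) p := by
  have hsum : ContDiff ℝ (⊤ : ℕ∞) (fun r : Pt n => ∑ l ∈ s, c l * F l r) :=
    ContDiff.sum fun l _ => contDiff_const.mul (hF l)
  rw [Eul_eq hsum]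
  show ∑ i : Fin n, Cf i (fun r => ∑ l ∈ s, c l * F l r) p = _
  have hper : ∀ i : Fin n, Cf i (fun r => ∑ l ∈ s, c l * F l r) p
      = ∑ l ∈ s, c l * Cf i (F l) p := by
    intro i
    have e1 : Dd (eX i) (fun r => ∑ l ∈ s, c l * F l r) p
        = ∑ l ∈ s, c l * Dd (eX i) (F l) p := by
      rw [Dd_sum s _ (fun l _ =>
        ((((hF l).differentiable (by simp)).const_mul (c l)).differentiableAt)) _]
      exact Finset.sum_congr rfl fun l _ =>
        Dd_const_mul (((hF l).differentiable (by simp)).differentiableAt) _ _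
    have e2 : Dd (eY i) (fun r => ∑ l ∈ s, c l * F l r) p
        = ∑ l ∈ s, c l * Dd (eY i) (F l) p := by
      rw [Dd_sum s _ (fun l _ =>
        ((((hF l).differentiable (by simp)).const_mul (c l)).differentiableAt)) _]
      exact Finset.sum_congr rfl fun l _ =>
        Dd_const_mul (((hF l).differentiable (by simp)).differentiableAt) _ _
    show (p.1 i : ℂ) * Dd (eX i) (fun r => ∑ l ∈ s, c l * F l r) p
        + (p.2.1 i : ℂ) * Dd (eY i) (fun r => ∑ l ∈ s, c l * F l r) p = _
    rw [e1, e2, Finset.mul_sum, Finset.mul_sum, ← Finset.sum_add_distrib]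
    exact Finset.sum_congr rfl fun l _ => by unfold Cf; ring
  rw [Finset.sum_congr rfl fun i _ => hper i, Finset.sum_comm]
  refine Finset.sum_congr rfl fun l _ => ?_
  rw [Eul_eq (hF l), Finset.mul_sum]

end SD

namespace SD
variable {n : ℕ}

lemma iter_smooth (m : Pt n → ℂ) (hm : ContDiff ℝ (⊤ : ℕ∞) m) :
    ∀ l, ContDiff ℝ (⊤ : ℕ∞) ((Xs n)^[l] m) := by
  intro l
  induction l with
  | zero => exact hm
  | succ l ih => rw [Function.iterate_succ_apply']; exact smooth_Xs ih

lemma iter_Eul (k : ℕ) (m : Pt n → ℂ) (hm : ContDiff ℝ (⊤ : ℕ∞) m)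
    (hhom : ∀ p, Eul n m p = (k : ℂ) * m p) :
    ∀ l p, Eul n ((Xs n)^[l] m) p = ((k : ℂ) + l) * (Xs n)^[l] m p := by
  intro l
  induction l with
  | zero => intro p; simpa using hhom p
  | succ l ih =>
    intro p
    rw [Function.iterate_succ_apply']
    rw [comm2 (iter_smooth m hm l) p]
    have h1 : Eul n ((Xs n)^[l] m) = fun r => ((k : ℂ) + l) * (Xs n)^[l] m r :=
      funext fun r => ih r
    rw [h1, Xs_const_mul (iter_smooth m hm l) _ p, ← Function.iterate_succ_apply' (Xs n) l m]
    push_cast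
    ring

lemma iter_Ds (k : ℕ) (m : Pt n → ℂ) (hm : ContDiff ℝ (⊤ : ℕ∞) m)
    (hker : ∀ p, Ds n m p = 0) (hhom : ∀ p, Eul n m p = (k : ℂ) * m p) :
    ∀ l p, Ds n ((Xs n)^[l + 1] m) p
    = -Complex.I * (((l : ℂ) + 1) * (2 * (k : ℂ) + 2 * (n : ℂ) + (l : ℂ)) / 2) *
      (Xs n)^[l] m p := by
  intro l
  induction l with
  | zero =>
    intro p
    rw [show (Xs n)^[0 + 1] m = Xs n m from rfl]
    rw [comm1 hm p]
    have h0 : Ds n m = fun _ => (0 : ℂ) := funext hker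
    rw [h0, Xs_zero]
    have hEN : EN n m p = ((k : ℂ) + n) * m p := by
      unfold EN; rw [hhom p]; ring
    rw [hEN]
    show (0 : ℂ) - Complex.I * (((k : ℂ) + n) * m p) = _
    rw [show (Xs n)^[0] m = m from rfl]
    push_cast
    ring
  | succ l ih =>
    intro p
    rw [Function.iterate_succ_apply' (Xs n) (l + 1) m]
    rw [comm1 (iter_smooth m hm (l + 1)) p]
    have h1 : Ds n ((Xs n)^[l + 1] m) = fun r =>
        (-Complex.I * (((l : ℂ) + 1) * (2 * (k : ℂ) + 2 * (n : ℂ) + (l : ℂ)) / 2)) *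
          (Xs n)^[l] m r := funext fun r => ih r
    rw [h1, Xs_const_mul (iter_smooth m hm l) _ p, ← Function.iterate_succ_apply' (Xs n) l m]
    have hEN : EN n ((Xs n)^[l + 1] m) p
        = ((k : ℂ) + (l + 1) + n) * (Xs n)^[l + 1] m p := by
      unfold EN
      rw [iter_Eul k m hm hhom (l + 1) p]
      push_cast
      ring
    rw [hEN]
    push_cast
    ring

lemma coeff (hn : 1 ≤ n) (j k l : ℕ) (hl : l < j) (α : ℂ) :
    (2 : ℂ) ^ (l + 1) * α ^ (l + 1) * (j.choose (l + 1) : ℂ) *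
      ((Nat.factorial (2 * k + 2 * n - 1) : ℂ) /
        (Nat.factorial (2 * k + 2 * n - 1 + (l + 1)) : ℂ)) *
      (-Complex.I * (((l : ℂ) + 1) * (2 * (k : ℂ) + 2 * (n : ℂ) + (l : ℂ)) / 2))
    = -Complex.I * α * ((j : ℂ) - (l : ℂ)) *
      ((2 : ℂ) ^ l * α ^ l * (j.choose l : ℂ) *
        ((Nat.factorial (2 * k + 2 * n - 1) : ℂ) /
          (Nat.factorial (2 * k + 2 * n - 1 + l) : ℂ))) := by
  have hc : ((2 * k + 2 * n + l : ℕ) : ℂ) ≠ 0 := Nat.cast_ne_zero.mpr (by omega)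
  have hne : (Nat.factorial (2 * k + 2 * n - 1 + l) : ℂ) ≠ 0 :=
    Nat.cast_ne_zero.mpr (Nat.factorial_ne_zero _)
  have hcc : ((2 * k + 2 * n + l : ℕ) : ℂ) = 2 * (k : ℂ) + 2 * (n : ℂ) + (l : ℂ) := by
    push_cast; ring
  have hc' : (2 * (k : ℂ) + 2 * (n : ℂ) + (l : ℂ)) ≠ 0 := by rw [← hcc]; exact hc
  have e1 : (Nat.factorial (2 * k + 2 * n - 1 + (l + 1)) : ℂ)
      = (2 * (k : ℂ) + 2 * (n : ℂ) + (l : ℂ)) * (Nat.factorial (2 * k + 2 * n - 1 + l) : ℂ) := by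
    have h1 : 2 * k + 2 * n - 1 + (l + 1) = (2 * k + 2 * n - 1 + l) + 1 := by omega
    rw [h1, Nat.factorial_succ, Nat.cast_mul, ← hcc]
    congr 2
    omega
  have e2 : ((l : ℂ) + 1) * (j.choose (l + 1) : ℂ) = ((j : ℂ) - (l : ℂ)) * (j.choose l : ℂ) := by
    have h := Nat.choose_succ_right_eq j l
    have h2 := congrArg (Nat.cast : ℕ → ℂ) h
    push_cast [Nat.cast_sub hl.le] at h2
    linear_combination h2
  rw [e1]
  field_simp
  rw [neg_inj, div_eq_iff (show (2 * ((k : ℂ) + n) + l) ≠ 0 by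
    rw [show (2 * ((k : ℂ) + n) + l) = 2 * k + 2 * n + l by ring]; exact hc')]
  linear_combination (2 ^ (l + 1) * α ^ (l + 1) * (Nat.factorial (2 * k + 2 * n - 1) : ℂ) *
    (2 * ((k : ℂ) + n) + l)) * e2

end SD

namespace SD

/-- The Laguerre-type coefficient. -/
def co (j k n' : ℕ) (α : ℂ) (l : ℕ) : ℂ :=
  (2 : ℂ) ^ l * α ^ l * (j.choose l : ℂ) *
    ((Nat.factorial (2 * k + 2 * n' - 1) : ℂ) / (Nat.factorial (2 * k + 2 * n' - 1 + l) : ℂ))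

end SD


/-- For a symplectic monogenic `m` of homogeneity `k`, the function
`g = Σ_{l=0}^{j} 2^l α^l binom(j,l) ((2k+2n−1)!/(2k+2n−1+l)!) X_s^l m`
(which equals `j!((2k+2n−1)!/(2k+2n−1+j)!) L_j^{2n+2k−1}(−2α X_s) m` in terms of the
generalized Laguerre polynomial) satisfies the eigenvalue equation
`D_s g − i α (E+n) g = −i α (n+j+k) g` of the symplectic spin harmonic oscillator. -/
theorem laguerre_eigenfunction (n : ℕ) (hn : 1 ≤ n) (j k : ℕ) (α : ℂ) (m : Pt n → ℂ)
    (hm : ContDiff ℝ (⊤ : ℕ∞) m) (hker : ∀ p, Ds n m p = 0)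
    (hhom : ∀ p, Eul n m p = (k : ℂ) * m p) :
    ∀ p, Ds n (fun r => ∑ l ∈ Finset.range (j + 1),
        (2 : ℂ) ^ l * α ^ l * (j.choose l : ℂ) *
          ((Nat.factorial (2 * k + 2 * n - 1) : ℂ) /
            (Nat.factorial (2 * k + 2 * n - 1 + l) : ℂ)) * (Xs n)^[l] m r) p -
      Complex.I * α * EN n (fun r => ∑ l ∈ Finset.range (j + 1),
        (2 : ℂ) ^ l * α ^ l * (j.choose l : ℂ) *
          ((Nat.factorial (2 * k + 2 * n - 1) : ℂ) /
            (Nat.factorial (2 * k + 2 * n - 1 + l) : ℂ)) * (Xs n)^[l] m r) p =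
      -Complex.I * α * ((n : ℂ) + j + k) * (∑ l ∈ Finset.range (j + 1),
        (2 : ℂ) ^ l * α ^ l * (j.choose l : ℂ) *
          ((Nat.factorial (2 * k + 2 * n - 1) : ℂ) /
            (Nat.factorial (2 * k + 2 * n - 1 + l) : ℂ)) * (Xs n)^[l] m p) := by
  intro p
  have hF : ∀ l, ContDiff ℝ (⊤ : ℕ∞) ((Xs n)^[l] m) := SD.iter_smooth m hm
  show Ds n (fun r => ∑ l ∈ Finset.range (j + 1), SD.co j k n α l * (Xs n)^[l] m r) p
      - Complex.I * α *
        EN n (fun r => ∑ l ∈ Finset.range (j + 1), SD.co j k n α l * (Xs n)^[l] m r) p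
      = -Complex.I * α * ((n : ℂ) + j + k) *
        (∑ l ∈ Finset.range (j + 1), SD.co j k n α l * (Xs n)^[l] m p)
  have h1 : Ds n (fun r => ∑ l ∈ Finset.range (j + 1),
        SD.co j k n α l * (Xs n)^[l] m r) p
      = ∑ l ∈ Finset.range (j + 1), SD.co j k n α l * Ds n ((Xs n)^[l] m) p :=
    SD.Ds_lin _ _ _ hF p
  have hDsSum : ∑ l ∈ Finset.range (j + 1), SD.co j k n α l * Ds n ((Xs n)^[l] m) p
      = ∑ l ∈ Finset.range (j + 1),
          -Complex.I * α * ((j : ℂ) - l) * (SD.co j k n α l * (Xs n)^[l] m p) := by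
    rw [Finset.sum_range_succ'
      (fun l => SD.co j k n α l * Ds n ((Xs n)^[l] m) p) j]
    rw [Finset.sum_range_succ
      (fun l => -Complex.I * α * ((j : ℂ) - l) * (SD.co j k n α l * (Xs n)^[l] m p)) j]
    have hz : SD.co j k n α 0 * Ds n ((Xs n)^[0] m) p = 0 := by
      rw [show Ds n ((Xs n)^[0] m) p = Ds n m p from rfl, hker p]; ring
    have hj : -Complex.I * α * ((j : ℂ) - (j : ℂ)) * (SD.co j k n α j * (Xs n)^[j] m p)
        = 0 := by ring
    rw [hz, hj, add_zero, add_zero]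
    refine Finset.sum_congr rfl fun l hl => ?_
    rw [SD.iter_Ds k m hm hker hhom l p]
    have hco : SD.co j k n α (l + 1) *
        (-Complex.I * (((l : ℂ) + 1) * (2 * (k : ℂ) + 2 * (n : ℂ) + (l : ℂ)) / 2))
        = -Complex.I * α * ((j : ℂ) - l) * SD.co j k n α l :=
      SD.coeff hn j k l (Finset.mem_range.mp hl) α
    calc SD.co j k n α (l + 1) *
          (-Complex.I * (((l : ℂ) + 1) * (2 * (k : ℂ) + 2 * (n : ℂ) + (l : ℂ)) / 2) *
            (Xs n)^[l] m p)
        = (SD.co j k n α (l + 1) *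
            (-Complex.I * (((l : ℂ) + 1) * (2 * (k : ℂ) + 2 * (n : ℂ) + (l : ℂ)) / 2))) *
            (Xs n)^[l] m p := by ring
      _ = (-Complex.I * α * ((j : ℂ) - l) * SD.co j k n α l) * (Xs n)^[l] m p := by
          rw [hco]
      _ = -Complex.I * α * ((j : ℂ) - l) * (SD.co j k n α l * (Xs n)^[l] m p) := by ring
  have hEN : EN n (fun r => ∑ l ∈ Finset.range (j + 1),
        SD.co j k n α l * (Xs n)^[l] m r) p
      = ∑ l ∈ Finset.range (j + 1),
          ((k : ℂ) + l + n) * (SD.co j k n α l * (Xs n)^[l] m p) := by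
    show Eul n (fun r => ∑ l ∈ Finset.range (j + 1),
        SD.co j k n α l * (Xs n)^[l] m r) p
      + (n : ℂ) * (∑ l ∈ Finset.range (j + 1), SD.co j k n α l * (Xs n)^[l] m p) = _
    rw [SD.Eul_lin _ _ _ hF p, Finset.mul_sum, ← Finset.sum_add_distrib]
    refine Finset.sum_congr rfl fun l _ => ?_
    rw [SD.iter_Eul k m hm hhom l p]
    ring
  rw [h1, hDsSum, hEN, Finset.mul_sum, Finset.mul_sum, ← Finset.sum_sub_distrib]
  refine Finset.sum_congr rfl fun l _ => ?_
  ring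
end
end
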